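/- arXiv:2112.09812 — 9 statements merged into one kernel-verified Lean document; each statement's English description precedes it below -/
import Mathlib

section
/- Let G be an infinite group with a finite generating set A. If there exists an evacuation scheme with constant C on the right Cayley graph Γ = C(G;A), then the Cheeger isoperimetric constant satisfies ι*(G;A) ≥ 1/C. In particular, if a pure evacuation scheme exists, then ι*(G;A) ≥ 1. -/
/-- The group element corresponding to a letter `(i, b)`: the generator `A i` itself if
`b = true`, and its inverse if `b = false`. -/
def genOf {G : Type*} [Group G] {ι : Type*} (A : ι → G) : ι × Bool → G :=
  fun s => if s.2 then A s.1 else (A s.1)⁻¹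

/-- The Cheeger boundary of a finite set `Y` in the right Cayley graph of `G` with respect to
the generating family `A`: the set of directed edges `(g, s)` (an edge labelled by the letter
`s` going from `g` to `g * genOf A s`) with initial vertex in `Y` and terminal vertex
outside `Y`. -/
def cheegerBoundary {G : Type*} [Group G] {ι : Type*} (A : ι → G) (Y : Finset G) :
    Set (G × ι × Bool) :=
  {e | e.1 ∈ Y ∧ e.1 * genOf A e.2 ∉ Y}

/-- The Cheeger isoperimetric constant `ι*(G; A)`: the infimum over all finite nonempty
subsets `Y ⊆ G` of `|∂*Y| / |Y|`. -/
noncomputable def cheegerConst {G : Type*} [Group G] {ι : Type*} (A : ι → G) : ℝ :=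
  ⨅ Y : {Y : Finset G // Y.Nonempty},
    (Nat.card (cheegerBoundary A Y.1) : ℝ) / ((Y.1.card : ℝ))

/-- An evacuation scheme with constant `C` on the right Cayley graph of `G` with respect to
the generating family `A`: to each vertex `v` we assign an infinite directed path starting
at `v` (given by the sequence of positions `pos v` and the sequence of letters `step v`),
such that each directed edge `(g, s)` of the Cayley graph occurs at most `C` times in total
among all these paths. -/
structure EvacScheme {G : Type*} [Group G] {ι : Type*} (A : ι → G) (C : ℕ) where
  step : G → ℕ → ι × Bool
  pos : G → ℕ → G
  pos_zero : ∀ v : G, pos v 0 = v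
  pos_succ : ∀ (v : G) (n : ℕ), pos v (n + 1) = pos v n * genOf A (step v n)
  bounded : ∀ (g : G) (s : ι × Bool) (T : Finset (G × ℕ)),
      (∀ p ∈ T, pos p.1 p.2 = g ∧ step p.1 p.2 = s) → T.card ≤ C

/-- Let `G` be an infinite group with a finite generating set `A`. If there
exists an evacuation scheme with constant `C` on the right Cayley graph `Γ = C(G; A)`, then
the Cheeger isoperimetric constant satisfies `ι*(G; A) ≥ 1 / C`. In particular, if a pure
evacuation scheme exists (`C = 1`), then `ι*(G; A) ≥ 1`. -/
theorem cheegerConst_ge_of_evacScheme {G : Type*} [Group G] [Infinite G]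
    {ι : Type*} [Fintype ι] (A : ι → G)
    (hA : Subgroup.closure (Set.range A) = ⊤)
    (C : ℕ) (hC : 0 < C) (h : Nonempty (EvacScheme A C)) :
    (1 : ℝ) / C ≤ cheegerConst A ∧ (C = 1 → 1 ≤ cheegerConst A) := by
  classical
  obtain ⟨E⟩ := h
  have key : ∀ Y : Finset G, Y.Nonempty →
      (1 : ℝ) / C ≤ (Nat.card (cheegerBoundary A Y) : ℝ) / (Y.card : ℝ) := by
    intro Y hY
    -- every path starting in Y must eventually leave Y
    have escape : ∀ v ∈ Y, ∃ n, E.pos v n ∉ Y := by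
      intro v hv
      by_contra hcon
      push_neg at hcon
      let f : ℕ → (↑(Y : Set G) × (ι × Bool)) := fun n => (⟨E.pos v n, hcon n⟩, E.step v n)
      obtain ⟨e, he⟩ := Finite.exists_infinite_fiber f
      have hinf : (f ⁻¹' {e}).Infinite := Set.infinite_coe_iff.mp he
      obtain ⟨S, hS, hScard⟩ := hinf.exists_subset_card_eq (C + 1)
      have hb := E.bounded (e.1 : G) e.2 (S.image fun n => (v, n)) ?_
      · rw [Finset.card_image_of_injective _ (by intro a b hab; simpa using hab),
          hScard] at hb
        omega
      · intro p hp
        simp only [Finset.mem_image] at hp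
        obtain ⟨n, hn, rfl⟩ := hp
        have hfe : f n = e := hS hn
        refine ⟨?_, ?_⟩
        · have : ((f n).1 : G) = (e.1 : G) := by rw [hfe]
          exact this
        · have : (f n).2 = e.2 := by rw [hfe]
          exact this
    -- for each v ∈ Y choose a crossing time
    have hedge : ∀ v : G, ∃ p : ℕ, v ∈ Y → E.pos v p ∈ Y ∧ E.pos v (p + 1) ∉ Y := by
      intro v
      by_cases hv : v ∈ Y
      · have hex := escape v hv
        have hN := Nat.find_spec hex
        have hN0 : Nat.find hex ≠ 0 := by
          intro h0
          rw [h0, E.pos_zero] at hN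
          exact hN hv
        refine ⟨Nat.find hex - 1, fun _ => ⟨?_, ?_⟩⟩
        · by_contra hmem
          exact hmem (not_not.mp (Nat.find_min hex (by omega)))
        · have : Nat.find hex - 1 + 1 = Nat.find hex := by omega
          rw [this]; exact hN
      · exact ⟨0, fun h => absurd h hv⟩
    choose nv hnv using hedge
    let f : G → G × ι × Bool := fun v => (E.pos v (nv v), E.step v (nv v))
    let B : Finset (G × ι × Bool) :=
      (Y ×ˢ (Finset.univ : Finset (ι × Bool))).filter fun e => e.1 * genOf A e.2 ∉ Y
    have himg : Y.image f ⊆ B := by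
      intro e he
      simp only [Finset.mem_image] at he
      obtain ⟨v, hv, rfl⟩ := he
      obtain ⟨h1, h2⟩ := hnv v hv
      refine Finset.mem_filter.mpr ⟨Finset.mem_product.mpr ⟨h1, Finset.mem_univ _⟩, ?_⟩
      rw [← E.pos_succ]
      exact h2
    have hfiber : ∀ e ∈ Y.image f, (Y.filter fun v => f v = e).card ≤ C := by
      intro e _
      have hb := E.bounded e.1 e.2 ((Y.filter fun v => f v = e).image fun v => (v, nv v)) ?_
      · rwa [Finset.card_image_of_injective _
          (by intro a b hab; simpa using (Prod.mk.injEq .. ▸ hab).1)] at hb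
      · intro p hp
        simp only [Finset.mem_image, Finset.mem_filter] at hp
        obtain ⟨v, ⟨hv, hfv⟩, rfl⟩ := hp
        constructor
        · have : (f v).1 = e.1 := by rw [hfv]
          exact this
        · have : (f v).2 = e.2 := by rw [hfv]
          exact this
    have hcard : Y.card ≤ C * B.card := by
      calc Y.card ≤ C * (Y.image f).card := Finset.card_le_mul_card_image _ _ hfiber
        _ ≤ C * B.card := Nat.mul_le_mul_left _ (Finset.card_le_card himg)
    have hBeq : Nat.card (cheegerBoundary A Y) = B.card := by
      have : cheegerBoundary A Y = ↑B := by
        ext e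
        simp [cheegerBoundary, B, Finset.mem_filter, Finset.mem_product]
      rw [this, Nat.card_coe_set_eq, Set.ncard_coe_finset]
    have hYpos : (0 : ℝ) < (Y.card : ℝ) := by
      exact_mod_cast Finset.card_pos.mpr hY
    have hCpos : (0 : ℝ) < (C : ℝ) := by exact_mod_cast hC
    rw [div_le_div_iff₀ hCpos hYpos]
    calc (1 : ℝ) * Y.card = Y.card := one_mul _
      _ ≤ (C : ℝ) * B.card := by exact_mod_cast hcard
      _ = (Nat.card (cheegerBoundary A Y) : ℝ) * C := by rw [hBeq]; ring
  have hne : Nonempty {Y : Finset G // Y.Nonempty} := ⟨⟨{1}, Finset.singleton_nonempty 1⟩⟩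
  have hmain : (1 : ℝ) / C ≤ cheegerConst A := le_ciInf fun Y => key Y.1 Y.2
  exact ⟨hmain, fun hC1 => by simpa [hC1] using hmain⟩
end

section
/- Let G be a group with a finite generating set A and let Γ = C(G;A) be its right Cayley graph. The group G is non-amenable if and only if there exist constants C > 0 and ε > 0 and a flow f on Γ such that |f(e)| ≤ C for every directed edge e, and the inflow into every vertex is at least ε. -/
/-- The inverse of the directed edge `(g, (i, b))` from `g` to `g * genOf A (i, b)`:
it is the edge labelled by the inverse letter `(i, !b)` starting at the terminal vertex. -/
def edgeInv {G : Type*} [Group G] {ι : Type*} (A : ι → G) (e : G × ι × Bool) :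
    G × ι × Bool :=
  (e.1 * genOf A e.2, (e.2.1, !e.2.2))

/-- A flow on the right Cayley graph of `G` with respect to `A`: a real-valued function on
directed edges with `f(e⁻¹) = -f(e)`. -/
def IsFlow {G : Type*} [Group G] {ι : Type*} (A : ι → G) (f : G × ι × Bool → ℝ) : Prop :=
  ∀ e : G × ι × Bool, f (edgeInv A e) = - f e

/-- The inflow into a vertex `v`: the sum of the flow over all directed edges with terminal
vertex `v`; these are exactly the edges `(v * (genOf A s)⁻¹, s)` for letters `s`. -/
noncomputable def inflow {G : Type*} [Group G] {ι : Type*} [Fintype ι] (A : ι → G)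
    (f : G × ι × Bool → ℝ) (v : G) : ℝ :=
  ∑ s : ι × Bool, f (v * (genOf A s)⁻¹, s)

/-- A group is amenable if there is a finitely additive normalized right-invariant mean on
the set of all its subsets. -/
def IsAmenable (G : Type*) [Group G] : Prop :=
  ∃ μ : Set G → ℝ,
    (∀ Z : Set G, 0 ≤ μ Z ∧ μ Z ≤ 1) ∧
    μ Set.univ = 1 ∧
    (∀ Z₁ Z₂ : Set G, Disjoint Z₁ Z₂ → μ (Z₁ ∪ Z₂) = μ Z₁ + μ Z₂) ∧
    (∀ (Z : Set G) (g : G), μ ((· * g) '' Z) = μ Z)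

/-!
A bounded flow whose inflow is at least `ε` everywhere rules out an invariant mean: the inflow
at `v` is a sum over generators `a` of `f (v a⁻¹) - f v`, whose mean vanishes by invariance, yet
it is bounded below by `ε`. A finitely additive mean only integrates finitely-valued functions,
so the flow is first rounded down to multiples of a small `δ`.

Conversely, the divergences of bounded flows form a subspace `W` of the bounded functions. If
no element of `W` has negative supremum, Hahn–Banach extends `0` on `W` to a functional
`m ≤ sup`; it is a normalized positive functional vanishing on `W`, hence invariant under
translation by the generators and so by all of `G`, and `Z ↦ m 1_Z` is an invariant mean. If
some divergence has supremum `-ε < 0`, its flow has inflow at least `ε` everywhere.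
-/

open MeasureTheory

section Flows

variable {G : Type*} [Group G] {ι : Type*} (A : ι → G)

def flowOfForward (F : G → ι → ℝ) : G × ι × Bool → ℝ
  | (v, i, true) => F v i
  | (v, i, false) => -F (v * (A i)⁻¹) i

theorem isFlow_flowOfForward (F : G → ι → ℝ) : IsFlow A (flowOfForward A F) := by
  rintro ⟨v, i, _ | _⟩ <;> simp [edgeInv, genOf, flowOfForward]

theorem abs_flowOfForward_le {F : G → ι → ℝ} {C : ℝ} (hF : ∀ v i, |F v i| ≤ C)
    (e : G × ι × Bool) : |flowOfForward A F e| ≤ C := by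
  rcases e with ⟨v, i, _ | _⟩
  · simpa [flowOfForward] using hF _ i
  · exact hF v i

variable [Fintype ι]

theorem inflow_eq_sum_sub {f : G × ι × Bool → ℝ} (hf : IsFlow A f) (v : G) :
    inflow A f v = ∑ i, (f (v * (A i)⁻¹, i, true) - f (v, i, true)) := by
  simp only [inflow, Fintype.sum_prod_type, Fintype.sum_bool]
  refine Finset.sum_congr rfl fun i _ => ?_
  have hback := hf (v, i, true)
  simp only [edgeInv, genOf, if_true, Bool.not_true] at hback
  simp only [genOf, if_true, Bool.false_eq_true, if_false, inv_inv, hback]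
  ring

theorem inflow_flowOfForward (F : G → ι → ℝ) (v : G) :
    inflow A (flowOfForward A F) v = ∑ i, (F (v * (A i)⁻¹) i - F v i) :=
  inflow_eq_sum_sub A (isFlow_flowOfForward A F) v

end Flows

section FinitelyAdditiveIntegral

open SimpleFunc

variable {α : Type*} [MeasurableSpace α] {μ : Set α → ℝ}

theorem MeasureTheory.SimpleFunc.finsetSum_apply {ι : Type*} (s : Finset ι)
    (f : ι → SimpleFunc α ℝ) (x : α) : (∑ i ∈ s, f i) x = ∑ i ∈ s, f i x :=
  map_sum (AddMonoidHom.mk' (fun f : SimpleFunc α ℝ => f x) fun _ _ => rfl) f s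

/- Against the zero measure every set has finite measure, so `FinMeasAdditive 0` is plain
finite additivity and `setToSimpleFunc` integrates simple functions against a finitely additive
`μ`. -/
theorem finMeasAdditive_toSpanSingleton_comp
    (hadd : ∀ Z₁ Z₂ : Set α, Disjoint Z₁ Z₂ → μ (Z₁ ∪ Z₂) = μ Z₁ + μ Z₂) :
    FinMeasAdditive (0 : Measure α) (ContinuousLinearMap.toSpanSingleton ℝ ∘ μ) := by
  intro Z₁ Z₂ _ _ _ _ hZ
  simp only [Function.comp_apply, hadd Z₁ Z₂ hZ, ContinuousLinearMap.toSpanSingleton_add]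

noncomputable def additiveIntegral (μ : Set α → ℝ)
    (hadd : ∀ Z₁ Z₂ : Set α, Disjoint Z₁ Z₂ → μ (Z₁ ∪ Z₂) = μ Z₁ + μ Z₂) :
    SimpleFunc α ℝ →+ ℝ :=
  AddMonoidHom.mk' (setToSimpleFunc (ContinuousLinearMap.toSpanSingleton ℝ ∘ μ)) fun _ _ =>
    setToSimpleFunc_add _ (finMeasAdditive_toSpanSingleton_comp hadd) integrable_zero_measure
      integrable_zero_measure

variable (hadd : ∀ Z₁ Z₂ : Set α, Disjoint Z₁ Z₂ → μ (Z₁ ∪ Z₂) = μ Z₁ + μ Z₂)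
include hadd

theorem le_additiveIntegral (hμ : ∀ Z, 0 ≤ μ Z) (huniv : μ Set.univ = 1)
    {f : SimpleFunc α ℝ} {c : ℝ} (hc : ∀ x, c ≤ f x) : c ≤ additiveIntegral μ hadd f := by
  have hconst : additiveIntegral μ hadd (const α c) = c := by
    simp [additiveIntegral, setToSimpleFunc_const (ContinuousLinearMap.toSpanSingleton ℝ ∘ μ)
      (finMeasAdditive_toSpanSingleton_comp hadd).map_empty_eq_zero, huniv]
  have hnonneg : 0 ≤ additiveIntegral μ hadd (f - const α c) :=
    setToSimpleFunc_nonneg (ContinuousLinearMap.toSpanSingleton ℝ ∘ μ)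
      (fun Z x hx => smul_nonneg hx (hμ Z)) _ fun x => sub_nonneg.2 (hc x)
  rwa [map_sub, hconst, sub_nonneg] at hnonneg

theorem additiveIntegral_comp_equiv (e : α ≃ α) (he : Measurable e)
    (hμ : ∀ Z, μ (e ⁻¹' Z) = μ Z) (f : SimpleFunc α ℝ) :
    additiveIntegral μ hadd (f.comp e he) = additiveIntegral μ hadd f := by
  have hrange : (f.comp e he).range = f.range := by
    apply Finset.coe_injective
    simp only [coe_range, coe_comp, e.surjective.range_comp]
  simp only [additiveIntegral, AddMonoidHom.mk'_apply, setToSimpleFunc, hrange, coe_comp,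
    Set.preimage_comp, Function.comp_apply, hμ]

end FinitelyAdditiveIntegral

theorem exists_simpleFunc_le_lt_add {α : Type*} [MeasurableSpace α] [DiscreteMeasurableSpace α]
    {φ : α → ℝ} {C : ℝ} (hφ : ∀ x, |φ x| ≤ C) {δ : ℝ} (hδ : 0 < δ) :
    ∃ ψ : SimpleFunc α ℝ, ∀ x, ψ x ≤ φ x ∧ φ x < ψ x + δ := by
  have hrange : (Set.range fun x => δ * ⌊φ x / δ⌋).Finite := by
    refine ((Set.finite_Icc ⌊-C / δ⌋ ⌊C / δ⌋).image fun k : ℤ => δ * k).subset ?_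
    rintro _ ⟨x, rfl⟩
    have hx := abs_le.1 (hφ x)
    exact ⟨_, ⟨Int.floor_mono (div_le_div_of_nonneg_right hx.1 hδ.le),
      Int.floor_mono (div_le_div_of_nonneg_right hx.2 hδ.le)⟩, rfl⟩
  refine ⟨⟨fun x => δ * ⌊φ x / δ⌋, fun _ => .of_discrete, hrange⟩, fun x => ⟨?_, ?_⟩⟩
  · calc δ * ⌊φ x / δ⌋ ≤ δ * (φ x / δ) := by gcongr; exact Int.floor_le _
      _ = φ x := by field_simp
  · calc φ x = δ * (φ x / δ) := by field_simp
      _ < δ * (⌊φ x / δ⌋ + 1) := by gcongr; exact Int.lt_floor_add_one _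
      _ = δ * ⌊φ x / δ⌋ + δ := by ring

theorem not_isAmenable_of_flow {G : Type*} [Group G] {ι : Type*} [Fintype ι] (A : ι → G)
    {C ε : ℝ} {f : G × ι × Bool → ℝ} (hε : 0 < ε) (hf : IsFlow A f) (hC : ∀ e, |f e| ≤ C) (hin : ∀ v, ε ≤ inflow A f v) :
    ¬ IsAmenable G := by
  rintro ⟨μ, hμ, huniv, hadd, hinv⟩
  let _ : MeasurableSpace G := ⊤
  have : DiscreteMeasurableSpace G := ⟨fun _ => trivial⟩
  set n : ℝ := ((Fintype.card ι : ℕ) : ℝ)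
  set δ := ε / (n + 1)
  have hδ : 0 < δ := by positivity
  choose φ hφ using fun i =>
    exists_simpleFunc_le_lt_add (φ := fun v => f (v, i, true)) (fun v => hC _) hδ
  have hμτ : ∀ i Z, μ (Equiv.mulRight (A i)⁻¹ ⁻¹' Z) = μ Z := fun i Z => by
    rw [Equiv.coe_mulRight, ← Set.image_mul_right', hinv]
  -- `D` integrates to zero by invariance, yet it is bounded below by `δ` since
  -- approximating `f` within `δ` changes the inflow by at most `n * δ = ε - δ`.
  let D := ∑ i, ((φ i).comp (Equiv.mulRight (A i)⁻¹) .of_discrete - φ i)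
  have hD : additiveIntegral μ hadd D = 0 := by
    simp only [D, map_sum, map_sub, additiveIntegral_comp_equiv hadd _ _ (hμτ _), sub_self,
      Finset.sum_const_zero]
  have hDδ : ∀ v, δ ≤ D v := fun v => by
    have hsum := Finset.sum_le_sum fun i (_ : i ∈ Finset.univ) =>
      show f (v * (A i)⁻¹, i, true) - f (v, i, true) ≤ φ i (v * (A i)⁻¹) - φ i v + δ by
        linarith [hφ i (v * (A i)⁻¹), hφ i v]
    rw [← inflow_eq_sum_sub A hf, Finset.sum_add_distrib, Finset.sum_const, Finset.card_univ,
      nsmul_eq_mul] at hsum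
    have hεδ : (n + 1) * δ = ε := mul_div_cancel₀ ε (by positivity)
    simp only [D, SimpleFunc.finsetSum_apply, SimpleFunc.sub_apply, SimpleFunc.coe_comp,
      Function.comp_apply, Equiv.coe_mulRight]
    linarith [hin v]
  linarith [le_additiveIntegral hadd (fun Z => (hμ Z).1) huniv hDδ]


section BoundedFunctions

variable {X : Type*}

def boundedFunctions (X : Type*) : Submodule ℝ (X → ℝ) where
  carrier := {h | ∃ M, ∀ x, |h x| ≤ M}
  add_mem' := by
    rintro h k ⟨M, hM⟩ ⟨N, hN⟩
    exact ⟨M + N, fun x => (abs_add_le _ _).trans (add_le_add (hM x) (hN x))⟩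
  zero_mem' := ⟨0, fun x => by simp⟩
  smul_mem' := by
    rintro c h ⟨M, hM⟩
    exact ⟨|c| * M, fun x => by
      rw [Pi.smul_apply, smul_eq_mul, abs_mul]
      exact mul_le_mul_of_nonneg_left (hM x) (abs_nonneg c)⟩

namespace boundedFunctions

theorem exists_bound {ι : Type*} [Finite ι] (F : ι → boundedFunctions X) :
    ∃ C, 0 < C ∧ ∀ i x, |(F i : X → ℝ) x| ≤ C := by
  choose M hM using fun i => (F i).2
  obtain ⟨C, hC⟩ := Finite.exists_le M
  exact ⟨max C 1, by positivity, fun i x => (hM i x).trans ((hC i).trans (le_max_left _ _))⟩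

noncomputable def sup (h : boundedFunctions X) : ℝ := ⨆ x, (h : X → ℝ) x

theorem le_sup (h : boundedFunctions X) (x : X) : (h : X → ℝ) x ≤ sup h := by
  obtain ⟨M, hM⟩ := h.2
  exact le_ciSup ⟨M, by rintro _ ⟨y, rfl⟩; exact (abs_le.1 (hM y)).2⟩ x

theorem sup_smul {c : ℝ} (hc : 0 < c) (h : boundedFunctions X) : sup (c • h) = c * sup h :=
  (Real.mul_iSup_of_nonneg hc.le _).symm

variable [Nonempty X]

theorem sup_le {h : boundedFunctions X} {c : ℝ} (hc : ∀ x, (h : X → ℝ) x ≤ c) : sup h ≤ c :=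
  ciSup_le hc

theorem sup_add_le (h k : boundedFunctions X) : sup (h + k) ≤ sup h + sup k :=
  sup_le fun x => add_le_add (le_sup h x) (le_sup k x)

theorem exists_le_sup_of_sup_nonneg (W : Submodule ℝ (boundedFunctions X))
    (hW : ∀ w ∈ W, 0 ≤ sup w) :
    ∃ m : boundedFunctions X →ₗ[ℝ] ℝ, (∀ h, m h ≤ sup h) ∧ ∀ w ∈ W, m w = 0 := by
  obtain ⟨m, hmW, hm⟩ := exists_extension_of_le_sublinear ⟨W, 0⟩ sup
    (fun c hc h => sup_smul hc h) sup_add_le fun w => hW w w.2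
  exact ⟨m, hm, fun w hw => hmW ⟨w, hw⟩⟩

variable {m : boundedFunctions X →ₗ[ℝ] ℝ} (hm : ∀ h, m h ≤ sup h)
include hm

theorem apply_le_of_forall_le {h : boundedFunctions X} {c : ℝ} (hc : ∀ x, (h : X → ℝ) x ≤ c) :
    m h ≤ c :=
  (hm h).trans (sup_le hc)

theorem le_apply_of_forall_le {h : boundedFunctions X} {c : ℝ} (hc : ∀ x, c ≤ (h : X → ℝ) x) :
    c ≤ m h := by
  have := apply_le_of_forall_le hm (h := -h) (c := -c) fun x => neg_le_neg (hc x)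
  rwa [map_neg, neg_le_neg_iff] at this

end boundedFunctions

noncomputable def boundedIndicator (Z : Set X) : boundedFunctions X :=
  ⟨Z.indicator 1, 1, fun x => by by_cases hx : x ∈ Z <;> simp [hx]⟩

@[simp]
theorem coe_boundedIndicator (Z : Set X) : (boundedIndicator Z : X → ℝ) = Z.indicator 1 :=
  rfl

theorem boundedIndicator_union {Z₁ Z₂ : Set X} (hZ : Disjoint Z₁ Z₂) :
    boundedIndicator (Z₁ ∪ Z₂) = boundedIndicator Z₁ + boundedIndicator Z₂ :=
  Subtype.ext (Set.indicator_union_of_disjoint hZ 1)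

end BoundedFunctions

section Translation

variable {G : Type*} [Group G]

def rightTransl (g : G) : boundedFunctions G →ₗ[ℝ] boundedFunctions G :=
  (LinearMap.funLeft ℝ ℝ (· * g)).restrict fun _ ⟨M, hM⟩ => ⟨M, fun x => hM (x * g)⟩

@[simp]
theorem rightTransl_apply (g : G) (h : boundedFunctions G) (x : G) :
    (rightTransl g h : G → ℝ) x = (h : G → ℝ) (x * g) :=
  rfl

theorem rightTransl_one : rightTransl (1 : G) = LinearMap.id := by
  ext h x
  simp

theorem rightTransl_mul (g g' : G) : rightTransl (g * g') = rightTransl g ∘ₗ rightTransl g' := by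
  ext h x
  simp [mul_assoc]

theorem boundedIndicator_image_mul_right (Z : Set G) (g : G) :
    boundedIndicator ((· * g) '' Z) = rightTransl g⁻¹ (boundedIndicator Z) := by
  ext x
  simp only [boundedIndicator, rightTransl_apply, Set.image_mul_right]
  rfl

theorem comp_rightTransl_of_closure_eq_top {ι M : Type*} [AddCommMonoid M] [Module ℝ M]
    {A : ι → G} (hA : Subgroup.closure (Set.range A) = ⊤) {m : boundedFunctions G →ₗ[ℝ] M}
    (hm : ∀ i, m ∘ₗ rightTransl (A i) = m) (g : G) : m ∘ₗ rightTransl g = m := by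
  induction hA ▸ Subgroup.mem_top g using Subgroup.closure_induction with
  | mem _ hx => obtain ⟨i, rfl⟩ := hx; exact hm i
  | one => rw [rightTransl_one, LinearMap.comp_id]
  | mul x y _ _ hx hy => rw [rightTransl_mul, ← LinearMap.comp_assoc, hx, hy]
  | inv x _ hx => rw [← hx, LinearMap.comp_assoc, ← rightTransl_mul, mul_inv_cancel,
      rightTransl_one, LinearMap.comp_id, hx]

end Translation

section Divergence

variable {G : Type*} [Group G] {ι : Type*} [Fintype ι] (A : ι → G)

/-- The divergence (outflow minus inflow) of the flow carrying `F i v` along the edge from `v`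
to `v * A i`. -/
noncomputable def divergence : (ι → boundedFunctions G) →ₗ[ℝ] boundedFunctions G :=
  ∑ i, (LinearMap.id - rightTransl (A i)⁻¹) ∘ₗ LinearMap.proj i

theorem divergence_apply (F : ι → boundedFunctions G) (v : G) :
    (divergence A F : G → ℝ) v = ∑ i, ((F i : G → ℝ) v - (F i : G → ℝ) (v * (A i)⁻¹)) := by
  simp [divergence, Finset.sum_apply]

theorem divergence_single [DecidableEq ι] (i : ι) (h : boundedFunctions G) :
    divergence A (Pi.single i h) = h - rightTransl (A i)⁻¹ h := by
  rw [divergence, LinearMap.sum_apply, Fintype.sum_eq_single i fun j hj => by simp [hj]]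
  simp

theorem inflow_flowOfForward_eq_neg_divergence (F : ι → boundedFunctions G) (v : G) :
    inflow A (flowOfForward A fun w i => (F i : G → ℝ) w) v = -(divergence A F : G → ℝ) v := by
  rw [inflow_flowOfForward, divergence_apply, ← Finset.sum_neg_distrib]
  simp

theorem exists_flow_of_sup_divergence_neg {F : ι → boundedFunctions G}
    (hF : boundedFunctions.sup (divergence A F) < 0) :
    ∃ (C ε : ℝ), 0 < C ∧ 0 < ε ∧ ∃ f : G × ι × Bool → ℝ, IsFlow A f ∧
      (∀ e, |f e| ≤ C) ∧ ∀ v, ε ≤ inflow A f v := by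
  obtain ⟨C, hC, hFC⟩ := boundedFunctions.exists_bound F
  refine ⟨C, _, hC, neg_pos.2 hF, _, isFlow_flowOfForward A _,
    abs_flowOfForward_le A fun v i => hFC i v, fun v => ?_⟩
  rw [inflow_flowOfForward_eq_neg_divergence, neg_le_neg_iff]
  exact boundedFunctions.le_sup _ v

theorem isAmenable_of_sup_divergence_nonneg (hA : Subgroup.closure (Set.range A) = ⊤)
    (hdiv : ∀ F, 0 ≤ boundedFunctions.sup (divergence A F)) : IsAmenable G := by
  classical
  obtain ⟨m, hm, hmW⟩ := boundedFunctions.exists_le_sup_of_sup_nonneg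
    (LinearMap.range (divergence A)) (by rintro _ ⟨F, rfl⟩; exact hdiv F)
  have hgen : ∀ i, m ∘ₗ rightTransl (A i) = m := fun i => by
    ext h
    have hdivergence : divergence A (Pi.single i (rightTransl (A i) h)) =
        rightTransl (A i) h - h := by
      rw [divergence_single, ← LinearMap.comp_apply, ← rightTransl_mul, inv_mul_cancel,
        rightTransl_one, LinearMap.id_apply]
    have := hmW _ ⟨_, hdivergence⟩
    rwa [map_sub, sub_eq_zero] at this
  have hinv := comp_rightTransl_of_closure_eq_top hA hgen
  refine ⟨fun Z => m (boundedIndicator Z), fun Z => ⟨?_, ?_⟩, ?_, fun Z₁ Z₂ hZ => ?_, fun Z g => ?_⟩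
    <;> dsimp only
  · exact boundedFunctions.le_apply_of_forall_le hm fun x => by by_cases hx : x ∈ Z <;> simp [hx]
  · exact boundedFunctions.apply_le_of_forall_le hm fun x => by by_cases hx : x ∈ Z <;> simp [hx]
  · exact le_antisymm (boundedFunctions.apply_le_of_forall_le hm fun x => by simp)
      (boundedFunctions.le_apply_of_forall_le hm fun x => by simp)
  · rw [boundedIndicator_union hZ, map_add]
  · rw [boundedIndicator_image_mul_right, ← LinearMap.comp_apply, hinv]

end Divergence

/-- Let `G` be a group with a finite generating set `A` and let
`Γ = C(G; A)` be its right Cayley graph. The group `G` is non-amenable if and only if there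
exist constants `C > 0` and `ε > 0` and a flow `f` on `Γ` such that `|f(e)| ≤ C` for every
directed edge `e`, and the inflow into every vertex is at least `ε`. -/
theorem not_amenable_iff_exists_flow {G : Type*} [Group G]
    {ι : Type*} [Fintype ι] (A : ι → G)
    (hA : Subgroup.closure (Set.range A) = ⊤) :
    ¬ IsAmenable G ↔
      ∃ (C ε : ℝ), 0 < C ∧ 0 < ε ∧
        ∃ f : G × ι × Bool → ℝ, IsFlow A f ∧
          (∀ e : G × ι × Bool, |f e| ≤ C) ∧
          (∀ v : G, ε ≤ inflow A f v) := by
  constructor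
  · intro hG
    by_contra hflow
    exact hG <| isAmenable_of_sup_divergence_nonneg A hA fun F =>
      not_lt.1 fun hF => hflow (exists_flow_of_sup_divergence_neg A hF)
  · rintro ⟨C, ε, -, hε, f, hf, hC, hin⟩
    exact not_isAmenable_of_flow A hε hf hC hin
end

section
/- Let G be a group with a finite generating set A and let Γ = C(G;A) be its right Cayley graph. If there exist constants C > 0 and ε > 0 and a flow f on Γ such that |f(e)| ≤ C for every directed edge e and the inflow into every vertex is at least ε, then the Cheeger isoperimetric constant satisfies ι*(G;A) ≥ ε/C; in particular every finite nonempty subset Y ⊆ G satisfies ε·|Y| ≤ C·|∂*Y|. -/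
open Finset

section CayleyGraph

variable {G : Type*} [Group G] {ι : Type*} (A : ι → G)

lemma genOf_not (i : ι) (b : Bool) : genOf A (i, !b) = (genOf A (i, b))⁻¹ := by
  cases b <;> simp [genOf]

lemma edgeInv_edgeInv (e : G × ι × Bool) : edgeInv A (edgeInv A e) = e := by
  obtain ⟨g, i, b⟩ := e
  simp [edgeInv, genOf_not]

lemma edgeInv_ne (e : G × ι × Bool) : edgeInv A e ≠ e := fun h => by
  simpa [edgeInv] using congrArg (·.2.2) h

def cheegerBoundaryFinset [Fintype ι] [DecidableEq G] (Y : Finset G) : Finset (G × ι × Bool) :=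
  (Y ×ˢ univ).filter fun e => e.1 * genOf A e.2 ∉ Y

lemma coe_cheegerBoundaryFinset [Fintype ι] [DecidableEq G] (Y : Finset G) :
    (cheegerBoundaryFinset A Y : Set (G × ι × Bool)) = cheegerBoundary A Y := by
  ext e
  simp [cheegerBoundaryFinset, cheegerBoundary]

lemma natCard_cheegerBoundary [Fintype ι] [DecidableEq G] (Y : Finset G) :
    Nat.card (cheegerBoundary A Y) = (cheegerBoundaryFinset A Y).card := by
  rw [← coe_cheegerBoundaryFinset, Nat.card_coe_set_eq, Set.ncard_coe_finset]

lemma le_cheegerConst {c : ℝ}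
    (h : ∀ Y : Finset G, Y.Nonempty → c * Y.card ≤ Nat.card (cheegerBoundary A Y)) :
    c ≤ cheegerConst A := by
  have : Nonempty {Y : Finset G // Y.Nonempty} := ⟨⟨{1}, singleton_nonempty 1⟩⟩
  refine le_ciInf fun Y => ?_
  rw [le_div_iff₀ (by exact_mod_cast Y.2.card_pos)]
  exact h Y.1 Y.2

end CayleyGraph

namespace IsFlow

variable {G : Type*} [Group G] {ι : Type*} {A : ι → G} {f : G × ι × Bool → ℝ}

lemma inflow_eq_neg_sum_outgoing [Fintype ι] (hf : IsFlow A f) (v : G) :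
    inflow A f v = -∑ s : ι × Bool, f (v, s) := by
  rw [inflow, ← sum_neg_distrib]
  refine Fintype.sum_equiv ((Equiv.refl ι).prodCongr (Equiv.boolNot)) _ _ fun ⟨i, b⟩ => ?_
  have := hf (v * (genOf A (i, b))⁻¹, (i, b))
  simp only [edgeInv, inv_mul_cancel_right] at this
  simp only [Equiv.prodCongr_apply, Equiv.coe_refl, Prod.map, id, Equiv.boolNot_apply]
  rw [this, neg_neg]

/-- Edges inside `Y` cancel in pairs `e, e⁻¹`. -/
lemma sum_interior_eq_zero [Fintype ι] [DecidableEq G] (hf : IsFlow A f) (Y : Finset G) :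
    ∑ e ∈ (Y ×ˢ univ).filter (fun e => e.1 * genOf A e.2 ∈ Y), f e = 0 := by
  refine sum_involution (fun e _ => edgeInv A e) (fun e _ => by rw [hf]; ring)
    (fun e _ _ => edgeInv_ne A e) (fun e he => ?_) (fun e _ => edgeInv_edgeInv A e)
  obtain ⟨g, i, b⟩ := e
  simp only [mem_filter, mem_product, mem_univ, and_true] at he ⊢
  simpa [edgeInv, genOf_not] using he.symm

lemma sum_outgoing_eq_sum_cheegerBoundary [Fintype ι] [DecidableEq G] (hf : IsFlow A f)
    (Y : Finset G) :
    ∑ v ∈ Y, ∑ s : ι × Bool, f (v, s) = ∑ e ∈ cheegerBoundaryFinset A Y, f e := by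
  rw [← sum_product', ← sum_filter_add_sum_filter_not _ (fun e => e.1 * genOf A e.2 ∈ Y),
    hf.sum_interior_eq_zero, zero_add, cheegerBoundaryFinset]

lemma mul_card_le_mul_natCard_cheegerBoundary [Fintype ι] (hf : IsFlow A f) {C ε : ℝ}
    (hbound : ∀ e, |f e| ≤ C) (hin : ∀ v, ε ≤ inflow A f v) (Y : Finset G) :
    ε * Y.card ≤ C * Nat.card (cheegerBoundary A Y) := by
  classical
  calc ε * Y.card = ∑ _v ∈ Y, ε := by rw [sum_const, nsmul_eq_mul, mul_comm]
    _ ≤ ∑ v ∈ Y, inflow A f v := sum_le_sum fun v _ => hin v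
    _ = -∑ e ∈ cheegerBoundaryFinset A Y, f e := by
      simp only [hf.inflow_eq_neg_sum_outgoing, sum_neg_distrib,
        hf.sum_outgoing_eq_sum_cheegerBoundary]
    _ ≤ ∑ _e ∈ cheegerBoundaryFinset A Y, C := by
      rw [← sum_neg_distrib]
      exact sum_le_sum fun e _ => (neg_le_abs (f e)).trans (hbound e)
    _ = C * Nat.card (cheegerBoundary A Y) := by
      rw [sum_const, nsmul_eq_mul, mul_comm, natCard_cheegerBoundary]

end IsFlow

theorem cheegerConst_ge_of_flow_general {G : Type*} [Group G]
    {ι : Type*} [Fintype ι] (A : ι → G)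
    (C ε : ℝ) (hC : 0 < C)
    (f : G × ι × Bool → ℝ) (hf : IsFlow A f)
    (hbound : ∀ e : G × ι × Bool, |f e| ≤ C)
    (hin : ∀ v : G, ε ≤ inflow A f v) :
    ε / C ≤ cheegerConst A ∧
      ∀ Y : Finset G, Y.Nonempty →
        ε * (Y.card : ℝ) ≤ C * (Nat.card (cheegerBoundary A Y) : ℝ) := by
  have key := hf.mul_card_le_mul_natCard_cheegerBoundary hbound hin
  refine ⟨le_cheegerConst A fun Y _ => ?_, fun Y _ => key Y⟩
  rw [div_mul_eq_mul_div, div_le_iff₀ hC, mul_comm _ C]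
  exact key Y

/-- Let `G` be a group with finite generating set `A` and let
`Γ = C(G; A)` be its right Cayley graph. If there exist constants `C > 0` and `ε > 0` and a
flow `f` on `Γ` such that `|f(e)| ≤ C` for every directed edge `e` and the inflow into every
vertex is at least `ε`, then the Cheeger isoperimetric constant satisfies
`ι*(G; A) ≥ ε / C`; in particular every finite nonempty subset `Y ⊆ G` satisfies
`ε·|Y| ≤ C·|∂*Y|`. -/
theorem cheegerConst_ge_of_flow {G : Type*} [Group G]
    {ι : Type*} [Fintype ι] (A : ι → G)
    (hA : Subgroup.closure (Set.range A) = ⊤)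
    (C ε : ℝ) (hC : 0 < C) (hε : 0 < ε)
    (f : G × ι × Bool → ℝ) (hf : IsFlow A f)
    (hbound : ∀ e : G × ι × Bool, |f e| ≤ C)
    (hin : ∀ v : G, ε ≤ inflow A f v) :
    ε / C ≤ cheegerConst A ∧
      ∀ Y : Finset G, Y.Nonempty →
        ε * (Y.card : ℝ) ≤ C * (Nat.card (cheegerBoundary A Y) : ℝ) :=
  cheegerConst_ge_of_flow_general A C ε hC f hf hbound hin
end

section
/- Let G be an infinite group with a finite generating set A and fix a constant K. An evacuation scheme with constant K on the right Cayley graph Γ = C(G;A) exists if and only if for every finite nonempty subset Y ⊆ G there exists an evacuation scheme with constant K on the finite subgraph Y. -/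
/-- The inner boundary `∂Y` of a finite subset `Y`: the set of vertices of `Y` from which
some edge of the Cayley graph leads outside `Y`. -/
def innerBoundary {G : Type*} [Group G] {ι : Type*} (A : ι → G) (Y : Finset G) : Set G :=
  {g | g ∈ Y ∧ ∃ s : ι × Bool, g * genOf A s ∉ Y}

/-- An evacuation scheme with constant `K` on a finite subgraph `Y` of the right Cayley
graph: to each vertex `v ∈ Y` we assign a finite directed path of length `len v` lying
entirely inside `Y`, starting at `v` and ending at a vertex of the inner boundary `∂Y`,
such that each directed edge occurs at most `K` times in total among all these paths. -/
structure FinEvacScheme {G : Type*} [Group G] {ι : Type*} (A : ι → G) (Y : Finset G)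
    (K : ℕ) where
  len : G → ℕ
  step : G → ℕ → ι × Bool
  pos : G → ℕ → G
  pos_zero : ∀ v ∈ Y, pos v 0 = v
  pos_succ : ∀ v ∈ Y, ∀ n : ℕ, n < len v → pos v (n + 1) = pos v n * genOf A (step v n)
  inside : ∀ v ∈ Y, ∀ n : ℕ, n ≤ len v → pos v n ∈ Y
  ends : ∀ v ∈ Y, pos v (len v) ∈ innerBoundary A Y
  bounded : ∀ (g : G) (s : ι × Bool) (T : Finset (G × ℕ)),
      (∀ p ∈ T, p.1 ∈ Y ∧ p.2 < len p.1 ∧ pos p.1 p.2 = g ∧ step p.1 p.2 = s) →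
        T.card ≤ K

open Filter

section

variable {G : Type*} [Group G] {ι : Type*} {A : ι → G} {K : ℕ}

theorem EvacScheme.finite_visits (E : EvacScheme A K) (v : G) (x : G × (ι × Bool)) :
    {n | (E.pos v n, E.step v n) = x}.Finite := by
  by_contra hinf
  obtain ⟨t, hts, hcard⟩ := Set.Infinite.exists_subset_card_eq hinf (K + 1)
  have := E.bounded x.1 x.2 (t.map ⟨(v, ·), fun _ _ h => (Prod.mk.inj h).2⟩) fun p hp => by
    obtain ⟨n, hn, rfl⟩ := Finset.mem_map.1 hp
    exact Prod.ext_iff.1 (hts hn)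
  rw [Finset.card_map] at this
  omega

theorem EvacScheme.exists_pos_notMem [Finite ι] (E : EvacScheme A K) (Y : Finset G) (v : G) :
    ∃ n, E.pos v n ∉ Y := by
  by_contra! hY
  have hfin := (Y.finite_toSet.prod (Set.finite_univ (α := ι × Bool))).preimage'
    (f := fun n => (E.pos v n, E.step v n)) fun x _ => E.finite_visits v x
  exact Set.infinite_univ (hfin.subset fun n _ => ⟨hY n, trivial⟩)

theorem EvacScheme.exists_pos_succ_notMem [Finite ι] (E : EvacScheme A K) {Y : Finset G}
    {v : G} (hv : v ∈ Y) : ∃ n, E.pos v (n + 1) ∉ Y := by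
  obtain ⟨_ | n, hn⟩ := E.exists_pos_notMem Y v
  · exact absurd (by rwa [E.pos_zero]) hn
  · exact ⟨n, hn⟩

open Classical in
/-- The last time before the path from `v` first leaves `Y` (junk value `0` for `v ∉ Y`). -/
noncomputable def EvacScheme.exitTime [Finite ι] (E : EvacScheme A K) (Y : Finset G)
    (v : G) : ℕ :=
  if hv : v ∈ Y then Nat.find (E.exists_pos_succ_notMem hv) else 0

theorem EvacScheme.pos_mem_of_le_exitTime [Finite ι] (E : EvacScheme A K) {Y : Finset G}
    {v : G} (hv : v ∈ Y) {n : ℕ} (hn : n ≤ E.exitTime Y v) : E.pos v n ∈ Y := by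
  classical
  rw [EvacScheme.exitTime, dif_pos hv] at hn
  cases n with
  | zero => rwa [E.pos_zero]
  | succ m => exact not_not.1 (Nat.find_min (E.exists_pos_succ_notMem hv) hn)

theorem EvacScheme.pos_exitTime_succ_notMem [Finite ι] (E : EvacScheme A K) {Y : Finset G}
    {v : G} (hv : v ∈ Y) : E.pos v (E.exitTime Y v + 1) ∉ Y := by
  classical
  rw [EvacScheme.exitTime, dif_pos hv]
  exact Nat.find_spec (E.exists_pos_succ_notMem hv)

noncomputable def EvacScheme.truncate [Finite ι] (E : EvacScheme A K) (Y : Finset G) :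
    FinEvacScheme A Y K where
  len := E.exitTime Y
  step := E.step
  pos := E.pos
  pos_zero v _ := E.pos_zero v
  pos_succ v _ n _ := E.pos_succ v n
  inside _ hv _ hn := E.pos_mem_of_le_exitTime hv hn
  ends v hv := ⟨E.pos_mem_of_le_exitTime hv le_rfl, E.step v (E.exitTime Y v),
    E.pos_succ v _ ▸ E.pos_exitTime_succ_notMem hv⟩
  bounded g s T hT := E.bounded g s T fun p hp => (hT p hp).2.2

def FinEvacScheme.toEmpty {Y : Finset G} (S : FinEvacScheme A Y K) :
    FinEvacScheme A ∅ K where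
  len := S.len
  step := S.step
  pos := S.pos
  pos_zero := by simp
  pos_succ := by simp
  inside := by simp
  ends := by simp
  bounded _ _ T hT := by
    rw [Finset.eq_empty_of_forall_notMem fun p hp => Finset.notMem_empty _ (hT p hp).1]
    exact Nat.zero_le K

theorem FinEvacScheme.len_ne_of_pos_notMem_innerBoundary {Y : Finset G}
    (S : FinEvacScheme A Y K) {v : G} (hv : v ∈ Y) {n : ℕ}
    (h : S.pos v n ∉ innerBoundary A Y) : S.len v ≠ n := by
  rintro rfl
  exact h (S.ends v hv)

theorem eventually_notMem_innerBoundary [Finite ι] (A : ι → G) (g : G) :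
    ∀ᶠ Y in (atTop : Filter (Finset G)), g ∉ innerBoundary A Y := by
  filter_upwards [eventually_ge_atTop (Set.finite_range fun s => g * genOf A s).toFinset]
    with Y hY
  rintro ⟨-, s, hs⟩
  exact hs (hY (by simp))

def walk (A : ι → G) (v : G) (st : ℕ → ι × Bool) : ℕ → G
  | 0 => v
  | n + 1 => walk A v st n * genOf A (st n)

theorem FinEvacScheme.eventually_lt_len_and_pos_eq_walk [Finite ι] {l : Filter (Finset G)}
    (hl : l ≤ atTop) (S : ∀ Y : Finset G, FinEvacScheme A Y K) {v : G}
    {st : ℕ → ι × Bool} (hst : ∀ n, ∀ᶠ Y in l, (S Y).step v n = st n) (n : ℕ) :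
    ∀ᶠ Y in l, v ∈ Y ∧ n < (S Y).len v ∧ (S Y).pos v n = walk A v st n := by
  induction n with
  | zero =>
    filter_upwards [hl (eventually_ge_atTop {v}), hl (eventually_notMem_innerBoundary A v)]
      with Y hvY hbd
    have hv : v ∈ Y := hvY (Finset.mem_singleton_self v)
    have hpos : (S Y).pos v 0 = v := (S Y).pos_zero v hv
    exact ⟨hv, Nat.pos_of_ne_zero ((S Y).len_ne_of_pos_notMem_innerBoundary hv
      (by rwa [hpos])), hpos⟩
  | succ n ih =>
    filter_upwards [ih, hst n, hl (eventually_notMem_innerBoundary A (walk A v st (n + 1)))]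
      with Y ⟨hv, hn, hpos⟩ hstep hbd
    have hpos' : (S Y).pos v (n + 1) = walk A v st (n + 1) := by
      rw [(S Y).pos_succ v hv n hn, hpos, hstep, walk]
    exact ⟨hv, lt_of_le_of_ne hn
      ((S Y).len_ne_of_pos_notMem_innerBoundary hv (by rwa [hpos'])).symm, hpos'⟩

theorem EvacScheme.nonempty_of_forall_finEvacScheme [Finite ι]
    (h : ∀ Y : Finset G, Nonempty (FinEvacScheme A Y K)) : Nonempty (EvacScheme A K) := by
  let S Y := (h Y).some
  let U : Ultrafilter (Finset G) := .of atTop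
  choose st hst using fun v n => (U.eventually_exists_iff (P := fun a Y => (S Y).step v n = a)).1
    (.of_forall fun Y => ⟨_, rfl⟩)
  refine ⟨⟨st, fun v => walk A v (st v), fun _ => rfl, fun _ _ => rfl, fun g s T hT => ?_⟩⟩
  have hevent : ∀ᶠ Y in (U : Filter (Finset G)), ∀ p ∈ T, p.1 ∈ Y ∧ p.2 < (S Y).len p.1 ∧
      (S Y).pos p.1 p.2 = g ∧ (S Y).step p.1 p.2 = s := by
    rw [eventually_all_finset]
    intro p hp
    filter_upwards [FinEvacScheme.eventually_lt_len_and_pos_eq_walk (Ultrafilter.of_le _) S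
      (hst p.1) p.2, hst p.1 p.2] with Y ⟨hv, hn, hpos⟩ hstep
    exact ⟨hv, hn, hpos.trans (hT p hp).1, hstep.trans (hT p hp).2⟩
  obtain ⟨Y, hY⟩ := hevent.exists
  exact (S Y).bounded g s T hY

end

theorem evacScheme_iff_finEvacScheme_general {G : Type*} [Group G]
    {ι : Type*} [Fintype ι] (A : ι → G) (K : ℕ) :
    Nonempty (EvacScheme A K) ↔
      ∀ Y : Finset G, Y.Nonempty → Nonempty (FinEvacScheme A Y K) := by
  refine ⟨fun ⟨E⟩ Y _ => ⟨E.truncate Y⟩,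
    fun h => EvacScheme.nonempty_of_forall_finEvacScheme fun Y => ?_⟩
  obtain rfl | hY := Y.eq_empty_or_nonempty
  · exact ⟨(h {1} (Finset.singleton_nonempty 1)).some.toEmpty⟩
  · exact h Y hY

/-- Let `G` be an infinite group with a finite generating set `A` and fix a
constant `K`. An evacuation scheme with constant `K` on the right Cayley graph
`Γ = C(G; A)` exists if and only if for every finite nonempty subset `Y ⊆ G` there exists an
evacuation scheme with constant `K` on the finite subgraph `Y`. -/
theorem evacScheme_iff_finEvacScheme {G : Type*} [Group G] [Infinite G]
    {ι : Type*} [Fintype ι] (A : ι → G)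
    (hA : Subgroup.closure (Set.range A) = ⊤) (K : ℕ) :
    Nonempty (EvacScheme A K) ↔
      ∀ Y : Finset G, Y.Nonempty → Nonempty (FinEvacScheme A Y K) :=
  evacScheme_iff_finEvacScheme_general A K
end

section
/- Let G be an infinite group with a finite generating set A (with A injective, so the generators are pairwise distinct) and let Γ = C(G;A) be its right Cayley graph. Then ι*(G;A) ≥ 1 if and only if there exists a set S of directed edges of Γ such that every vertex v of Γ is the initial vertex of only finitely many edges of S and the terminal vertex of only finitely many edges of S, and for every vertex v the number of edges of S with initial vertex v exceeds the number of edges of S with terminal vertex v by at least 1. -/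
/-!
`ι* ≥ 1` says that at least `#Y` edges leave every finite nonempty `Y`. For an edge set `S`, the
total excess (out-degree minus in-degree in `S`) over `Y` is the number of edges of `S` leaving
`Y` minus the number entering it, so excess at least one everywhere gives `ι* ≥ 1`. Conversely,
for finite `F`, augmenting paths give a finite `S` with excess exactly one on `F`: if no residual
path from a vertex `u` of excess zero leaves `F`, the set reachable from `u` has all its boundary
edges in `S` and no edge of `S` entering it, so its total excess is its boundary size, at least
its size, while `u` contributes zero and every other vertex at most one. Compactness of
`{0,1}^edges`, each vertex condition involving only finitely many edges, glues these finite
solutions together.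
-/
open Finset

theorem exists_forall_of_forall_finset {X ι β : Type*} [Finite β] {p : ι → (X → β) → Prop}
    (D : ι → Finset X) (hD : ∀ i x y, Set.EqOn x y (D i) → p i x → p i y)
    (h : ∀ s : Finset ι, ∃ x, ∀ i ∈ s, p i x) : ∃ x, ∀ i, p i x := by
  let _ : TopologicalSpace β := ⊥
  have : DiscreteTopology β := ⟨rfl⟩
  have hclosed : ∀ i, IsClosed {x | p i x} := by
    intro i
    have hpre : {x | p i x} =
        (D i : Set X).domRestrict ⁻¹' ((D i : Set X).domRestrict '' {x | p i x}) := by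
      refine Set.Subset.antisymm (fun x hx => ⟨x, hx, rfl⟩) ?_
      rintro x ⟨y, hy, hyx⟩
      exact hD i y x (fun a ha => congrFun hyx ⟨a, ha⟩) hy
    rw [hpre]
    exact (isClosed_discrete _).preimage (continuous_pi fun a => continuous_apply _)
  obtain ⟨x, -, hx⟩ := isCompact_univ.inter_iInter_nonempty _ hclosed fun s => by
    obtain ⟨x, hx⟩ := h s
    exact ⟨x, trivial, Set.mem_iInter₂.2 hx⟩
  exact ⟨x, Set.mem_iInter.1 hx⟩

namespace Flow

open scoped Classical

variable {V E : Type*} (src tgt : E → V)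

noncomputable def excess (S : Finset E) (v : V) : ℤ :=
  #{e ∈ S | src e = v} - #{e ∈ S | tgt e = v}

def edgeBoundary (Y : Finset V) : Set E := {e | src e ∈ Y ∧ tgt e ∉ Y}

def ResidualEdge (S : Finset E) (e : E) (x y : V) : Prop :=
  e ∉ S ∧ src e = x ∧ tgt e = y ∨ e ∈ S ∧ tgt e = x ∧ src e = y

def ResidualReach (W : Finset V) (S : Finset E) : V → V → Prop :=
  Relation.ReflTransGen fun x y => x ∈ W ∧ ∃ e, ResidualEdge src tgt S e x y

noncomputable def toggle (S : Finset E) (e : E) : Finset E :=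
  if e ∈ S then S.erase e else insert e S

variable {src tgt}

lemma excess_eq_sum (S : Finset E) (v : V) :
    excess src tgt S v =
      ∑ e ∈ S, ((if src e = v then 1 else 0) - (if tgt e = v then 1 else 0)) := by
  rw [excess, natCast_card_filter, natCast_card_filter, sum_sub_distrib]

lemma sum_excess (S : Finset E) (Y : Finset V) :
    ∑ v ∈ Y, excess src tgt S v =
      #{e ∈ S | src e ∈ Y ∧ tgt e ∉ Y} - #{e ∈ S | tgt e ∈ Y ∧ src e ∉ Y} := by
  simp only [excess_eq_sum]
  rw [sum_comm, natCast_card_filter, natCast_card_filter, ← sum_sub_distrib]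
  refine sum_congr rfl fun e _ => ?_
  simp only [sum_sub_distrib]
  by_cases hs : src e ∈ Y <;> by_cases ht : tgt e ∈ Y <;> simp [hs, ht]

lemma card_le_card_filter_of_one_le_excess {S : Finset E} {Y : Finset V}
    (h : ∀ v ∈ Y, 1 ≤ excess src tgt S v) : #Y ≤ #{e ∈ S | src e ∈ Y ∧ tgt e ∉ Y} := by
  have := sum_le_sum h
  rw [sum_excess, sum_const, nsmul_one] at this
  omega

lemma excess_eq_ncard_sub_ncard {S : Set E} {T : Finset E} {v : V}
    (hT : ∀ e, src e = v ∨ tgt e = v → (e ∈ T ↔ e ∈ S)) :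
    excess src tgt T v = {e ∈ S | src e = v}.ncard - {e ∈ S | tgt e = v}.ncard := by
  have hsrc : {e ∈ S | src e = v} = ↑{e ∈ T | src e = v} := by
    ext e
    simp only [coe_filter, Set.mem_ofPred_eq]
    exact ⟨fun ⟨he, hv⟩ => ⟨(hT e (.inl hv)).2 he, hv⟩,
      fun ⟨he, hv⟩ => ⟨(hT e (.inl hv)).1 he, hv⟩⟩
  have htgt : {e ∈ S | tgt e = v} = ↑{e ∈ T | tgt e = v} := by
    ext e
    simp only [coe_filter, Set.mem_ofPred_eq]
    exact ⟨fun ⟨he, hv⟩ => ⟨(hT e (.inr hv)).2 he, hv⟩,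
      fun ⟨he, hv⟩ => ⟨(hT e (.inr hv)).1 he, hv⟩⟩
  rw [excess, hsrc, htgt, Set.ncard_coe_finset, Set.ncard_coe_finset]

lemma ResidualEdge.eq_left {S : Finset E} {e : E} {x y x' y' : V}
    (h : ResidualEdge src tgt S e x y) (h' : ResidualEdge src tgt S e x' y') : x = x' := by
  rcases h with ⟨he, rfl, -⟩ | ⟨he, rfl, -⟩ <;> rcases h' with ⟨he', rfl, -⟩ | ⟨he', rfl, -⟩ <;>
    first | rfl | contradiction

lemma mem_toggle_of_ne {S : Finset E} {e e' : E} (h : e' ≠ e) : e' ∈ toggle S e ↔ e' ∈ S := by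
  unfold toggle
  split_ifs <;> simp [h]

lemma ResidualEdge.toggle_of_ne {S : Finset E} {e e' : E} {x y : V}
    (h : ResidualEdge src tgt S e' x y) (hne : e' ≠ e) :
    ResidualEdge src tgt (toggle S e) e' x y := by
  unfold ResidualEdge at h ⊢
  rwa [mem_toggle_of_ne hne]

lemma ResidualEdge.excess_toggle {S : Finset E} {e : E} {x y : V}
    (h : ResidualEdge src tgt S e x y) :
    excess src tgt (toggle S e) = excess src tgt S + Pi.single x 1 - Pi.single y 1 := by
  funext v
  simp only [Pi.add_apply, Pi.sub_apply, Pi.single_apply, excess_eq_sum, toggle]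
  rcases h with ⟨he, rfl, rfl⟩ | ⟨he, rfl, rfl⟩
  · rw [if_neg he, sum_insert he]
    simp only [eq_comm (a := v)]
    ring
  · rw [if_pos he, sum_erase_eq_sub he]
    simp only [eq_comm (a := v)]
    ring

lemma ResidualReach.exists_first_step {W : Finset V} {S : Finset E} {u z : V}
    (h : ResidualReach src tgt W S u z) :
    u = z ∨ u ∈ W ∧ ∃ e w, ResidualEdge src tgt S e u w ∧
      ResidualReach src tgt (W.erase u) S w z := by
  have key : ∀ x, ResidualReach src tgt W S x z → ResidualReach src tgt (W.erase u) S x z ∨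
      u ∈ W ∧ ∃ e w, ResidualEdge src tgt S e u w ∧ ResidualReach src tgt (W.erase u) S w z := by
    intro x hx
    induction hx using Relation.ReflTransGen.head_induction_on with
    | refl => exact .inl .refl
    | @head x y hxy _ ih =>
      obtain ⟨hxW, e, hexy⟩ := hxy
      refine ih.elim (fun hy => ?_) .inr
      by_cases hxu : x = u
      · subst hxu
        exact .inr ⟨hxW, e, y, hexy, hy⟩
      · exact .inl (.head ⟨mem_erase.2 ⟨hxu, hxW⟩, e, hexy⟩ hy)
  refine (key u h).imp (fun hu => ?_) id
  rcases hu.cases_head with rfl | ⟨_, ⟨huW, -⟩, -⟩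
  · rfl
  · exact absurd huW (notMem_erase u W)

lemma ResidualReach.toggle {W : Finset V} {S : Finset E} {e : E} {u w z : V}
    (he : ResidualEdge src tgt S e u w) (h : ResidualReach src tgt (W.erase u) S w z) :
    ResidualReach src tgt (W.erase u) (toggle S e) w z :=
  Relation.ReflTransGen.mono (fun _ _ ⟨hx, e', hxy⟩ =>
    ⟨hx, e', hxy.toggle_of_ne fun hee => (mem_erase.1 hx).1 ((hee ▸ hxy).eq_left he)⟩) _ _ h

theorem ResidualReach.exists_excess_eq {W : Finset V} {S : Finset E} {u z : V}
    (h : ResidualReach src tgt W S u z) :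
    ∃ S', excess src tgt S' = excess src tgt S + Pi.single u 1 - Pi.single z 1 := by
  induction W using Finset.strongInduction generalizing S u with
  | H W ih =>
  rcases h.exists_first_step with rfl | ⟨hu, e, w, he, hw⟩
  · exact ⟨S, by simp⟩
  · obtain ⟨S', hS'⟩ := ih _ (erase_ssubset hu) (hw.toggle he)
    exact ⟨S', by rw [hS', he.excess_toggle]; abel⟩

lemma sum_excess_eq_ncard_edgeBoundary {S : Finset E} {Y : Finset V}
    (hY : ∀ e x y, x ∈ Y → ResidualEdge src tgt S e x y → y ∈ Y) :
    ∑ v ∈ Y, excess src tgt S v = (edgeBoundary src tgt Y).ncard := by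
  have hout : edgeBoundary src tgt Y = ↑{e ∈ S | src e ∈ Y ∧ tgt e ∉ Y} := by
    ext e
    refine ⟨fun ⟨hs, ht⟩ => ?_, fun he => (mem_filter.1 he).2⟩
    refine mem_filter.2 ⟨by_contra fun he => ht ?_, hs, ht⟩
    exact hY e _ _ hs (.inl ⟨he, rfl, rfl⟩)
  have hin : {e ∈ S | tgt e ∈ Y ∧ src e ∉ Y} = ∅ :=
    filter_eq_empty_iff.2 fun e he ⟨ht, hs⟩ => hs (hY e _ _ ht (.inr ⟨he, rfl, rfl⟩))
  rw [sum_excess, hin, hout, Set.ncard_coe_finset, card_empty, Nat.cast_zero, sub_zero]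

theorem exists_excess_eq_indicator {F : Finset V}
    (hiso : ∀ Y ⊆ F, Y.Nonempty → #Y ≤ (edgeBoundary src tgt Y).ncard)
    {F₀ : Finset V} (hF₀ : F₀ ⊆ F) :
    ∃ S : Finset E, ∀ v ∈ F, excess src tgt S v = if v ∈ F₀ then 1 else 0 := by
  induction F₀ using Finset.induction_on with
  | empty => exact ⟨∅, by simp [excess]⟩
  | @insert u F₁ hu ih =>
    obtain ⟨S, hS⟩ := ih ((subset_insert u F₁).trans hF₀)
    have huF : u ∈ F := hF₀ (mem_insert_self u F₁)
    by_cases hz : ∃ z ∉ F, ResidualReach src tgt F S u z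
    · obtain ⟨z, hzF, hz⟩ := hz
      obtain ⟨S', hS'⟩ := hz.exists_excess_eq
      refine ⟨S', fun v hv => ?_⟩
      rw [hS', Pi.sub_apply, Pi.add_apply, hS v hv, Pi.single_apply, Pi.single_apply,
        if_neg (ne_of_mem_of_not_mem hv hzF)]
      by_cases hvu : v = u <;> simp [hvu, hu]
    · push Not at hz
      set Y := {v ∈ F | ResidualReach src tgt F S u v}
      have huY : u ∈ Y := mem_filter.2 ⟨huF, .refl⟩
      have hclosed : ∀ e x y, x ∈ Y → ResidualEdge src tgt S e x y → y ∈ Y := by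
        intro e x y hx hxy
        obtain ⟨hxF, hux⟩ := mem_filter.1 hx
        have huy : ResidualReach src tgt F S u y := hux.tail ⟨hxF, e, hxy⟩
        exact mem_filter.2 ⟨by_contra fun hyF => hz y hyF huy, huy⟩
      have hlow := hiso Y (filter_subset _ _) ⟨u, huY⟩
      have hup : ∑ v ∈ Y, excess src tgt S v < #Y := by
        rw [sum_congr rfl fun v hv => hS v (filter_subset _ _ hv), sum_boole]
        exact_mod_cast card_lt_card (filter_ssubset.2 ⟨u, huY, hu⟩)
      have := sum_excess_eq_ncard_edgeBoundary hclosed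
      omega

theorem exists_excess_eq_one {F : Finset V}
    (hiso : ∀ Y ⊆ F, Y.Nonempty → #Y ≤ (edgeBoundary src tgt Y).ncard) :
    ∃ S : Finset E, ∀ v ∈ F, excess src tgt S v = 1 := by
  obtain ⟨S, hS⟩ := exists_excess_eq_indicator hiso subset_rfl
  exact ⟨S, fun v hv => (hS v hv).trans (if_pos hv)⟩

theorem forall_card_le_ncard_edgeBoundary_iff
    (hfin : ∀ v, {e | src e = v ∨ tgt e = v}.Finite) :
    (∀ Y : Finset V, Y.Nonempty → #Y ≤ (edgeBoundary src tgt Y).ncard) ↔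
      ∃ S : Set E, ∀ v, {e ∈ S | tgt e = v}.ncard + 1 ≤ {e ∈ S | src e = v}.ncard := by
  let D : V → Finset E := fun v => (hfin v).toFinset
  have hD : ∀ {v e}, src e = v ∨ tgt e = v → e ∈ D v := fun he => (hfin _).mem_toFinset.2 he
  constructor
  · intro hiso
    obtain ⟨x, hx⟩ := exists_forall_of_forall_finset (β := Bool)
      (p := fun v x => 1 ≤ excess src tgt {e ∈ D v | x e} v) D
      (fun v x y hxy => by rw [filter_congr fun e he => by rw [hxy he]]; exact id)
      (fun F => by
        obtain ⟨S, hS⟩ := exists_excess_eq_one fun Y hY hne => hiso Y hne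
        refine ⟨fun e => e ∈ S, fun v hv => ?_⟩
        rw [excess_eq_ncard_sub_ncard (S := ↑S) fun e he => by simp [hD he],
          ← excess_eq_ncard_sub_ncard fun e _ => mem_coe, hS v hv])
    refine ⟨{e | x e}, fun v => ?_⟩
    have := hx v
    rw [excess_eq_ncard_sub_ncard (S := {e | x e}) fun e he => by simp [hD he]] at this
    omega
  · rintro ⟨S, hS⟩ Y -
    let T : Finset E := {e ∈ Y.biUnion D | e ∈ S}
    have hT : ∀ v ∈ Y, 1 ≤ excess src tgt T v := fun v hv => by
      rw [excess_eq_ncard_sub_ncard (S := S) fun e he => by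
        simp only [T, mem_filter, mem_biUnion, and_iff_right_iff_imp]
        exact fun _ => ⟨v, hv, hD he⟩]
      have := hS v
      omega
    refine (card_le_card_filter_of_one_le_excess hT).trans ?_
    rw [← Set.ncard_coe_finset]
    refine Set.ncard_le_ncard (fun e he => (mem_filter.1 he).2) ?_
    exact (Y.biUnion D).finite_toSet.subset fun e he => mem_biUnion.2 ⟨_, he.1, hD (.inl rfl)⟩

end Flow

section Cayley

variable {G : Type*} [Group G] {ι : Type*}

lemma finite_setOf_fst_eq_or_mul_genOf_eq [Finite ι] (A : ι → G) (v : G) :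
    {e : G × ι × Bool | e.1 = v ∨ e.1 * genOf A e.2 = v}.Finite := by
  refine ((Set.finite_range fun s : ι × Bool => (v, s)).union
    (Set.finite_range fun s : ι × Bool => (v * (genOf A s)⁻¹, s))).subset ?_
  rintro ⟨g, s⟩ (rfl | h)
  · exact .inl ⟨s, rfl⟩
  · exact .inr ⟨s, by simp [← h]⟩

lemma one_le_cheegerConst_iff (A : ι → G) :
    1 ≤ cheegerConst A ↔ ∀ Y : Finset G, Y.Nonempty → #Y ≤ Nat.card (cheegerBoundary A Y) := by
  have : Nonempty {Y : Finset G // Y.Nonempty} := ⟨⟨{1}, singleton_nonempty 1⟩⟩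
  rw [cheegerConst, le_ciInf_iff ⟨0, by rintro _ ⟨Y, rfl⟩; positivity⟩, Subtype.forall]
  refine forall₂_congr fun Y hY => ?_
  rw [one_le_div (by exact_mod_cast hY.card_pos), Nat.cast_le]

end Cayley

theorem cheegerConst_ge_one_iff_exists_edgeSet_general {G : Type*} [Group G]
    {ι : Type*} [Fintype ι] (A : ι → G) :
    1 ≤ cheegerConst A ↔
      ∃ S : Set (G × ι × Bool),
        ∀ v : G,
          {e ∈ S | e.1 = v}.Finite ∧
          {e ∈ S | e.1 * genOf A e.2 = v}.Finite ∧
          Nat.card {e ∈ S | e.1 * genOf A e.2 = v} + 1 ≤ Nat.card {e ∈ S | e.1 = v} := by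
  have hfin := finite_setOf_fst_eq_or_mul_genOf_eq A
  rw [one_le_cheegerConst_iff]
  simp only [Nat.card_coe_set_eq]
  refine (Flow.forall_card_le_ncard_edgeBoundary_iff hfin).trans
    (exists_congr fun S => forall_congr' fun v => ⟨fun h => ⟨?_, ?_, h⟩, fun h => h.2.2⟩)
  · exact (hfin v).subset fun e he => .inl he.2
  · exact (hfin v).subset fun e he => .inr he.2

/-- Let `G` be an infinite group with a finite generating set `A` (with `A`
injective, so the generators are pairwise distinct) and let `Γ = C(G; A)` be its right
Cayley graph. Then `ι*(G; A) ≥ 1` if and only if there exists a set `S` of directed edges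
of `Γ` such that every vertex `v` is the initial vertex of only finitely many edges of `S`
and the terminal vertex of only finitely many edges of `S`, and for every vertex `v` the
number of edges of `S` with initial vertex `v` exceeds the number of edges of `S` with
terminal vertex `v` by at least `1`. -/
theorem cheegerConst_ge_one_iff_exists_edgeSet {G : Type*} [Group G] [Infinite G]
    {ι : Type*} [Fintype ι] (A : ι → G) (hinj : Function.Injective A)
    (hA : Subgroup.closure (Set.range A) = ⊤) :
    1 ≤ cheegerConst A ↔
      ∃ S : Set (G × ι × Bool),
        ∀ v : G,
          {e ∈ S | e.1 = v}.Finite ∧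
          {e ∈ S | e.1 * genOf A e.2 = v}.Finite ∧
          Nat.card {e ∈ S | e.1 * genOf A e.2 = v} + 1 ≤ Nat.card {e ∈ S | e.1 = v} :=
  cheegerConst_ge_one_iff_exists_edgeSet_general A
end

section
/- If the Cheeger isoperimetric constant of Thompson's group F with respect to the generating set {x₀, x₁, x₂} (where x₂ = x₀⁻¹x₁x₀) satisfies ι*(F; {x₀, x₁, x₂}) ≥ 1, then the Cheeger isoperimetric constant of F with respect to the generating multi-set {x₁, x̄₁, x₀, x₀} (where x̄₁ = x₁x₀⁻¹ and x₀ is taken with multiplicity two) satisfies ι*(F; {x₁, x̄₁, x₀, x₀}) ≥ 1. -/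
/-- The two relators of Thompson's group `F` in generators `x₀, x₁`:
`x₁^{x₀²} = x₁^{x₀x₁}` and `x₁^{x₀³} = x₁^{x₀²x₁}`, where `a^b = b⁻¹ab`. -/
def thompsonRels : Set (FreeGroup (Fin 2)) :=
  {((FreeGroup.of 0 ^ 2)⁻¹ * FreeGroup.of 1 * FreeGroup.of 0 ^ 2)⁻¹ *
     ((FreeGroup.of 0 * FreeGroup.of 1)⁻¹ * FreeGroup.of 1 *
       (FreeGroup.of 0 * FreeGroup.of 1)),
   ((FreeGroup.of 0 ^ 3)⁻¹ * FreeGroup.of 1 * FreeGroup.of 0 ^ 3)⁻¹ *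
     ((FreeGroup.of 0 ^ 2 * FreeGroup.of 1)⁻¹ * FreeGroup.of 1 *
       (FreeGroup.of 0 ^ 2 * FreeGroup.of 1))}

/-- Thompson's group `F`, given by the finite presentation
`⟨x₀, x₁ ∣ x₁^{x₀²} = x₁^{x₀x₁}, x₁^{x₀³} = x₁^{x₀²x₁}⟩`. -/
abbrev ThompsonF := PresentedGroup thompsonRels

/-- The generator `x₀` of Thompson's group `F`. -/
def x₀ : ThompsonF := PresentedGroup.of 0

/-- The generator `x₁` of Thompson's group `F`. -/
def x₁ : ThompsonF := PresentedGroup.of 1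

open Finset

section Exits

variable {G : Type*} [Group G] [DecidableEq G]

def exits (Y : Finset G) (w : G) : Finset G :=
  Y.filter fun y => y * w ∉ Y

theorem card_exits_mul_le (Y : Finset G) (u v : G) :
    #(exits Y (u * v)) ≤ #(exits Y u) + #(exits Y v) := by
  have hsub : exits Y (u * v) ⊆
      exits Y u ∪ (Y.filter fun y => y * u ∈ Y ∧ y * (u * v) ∉ Y) := by
    intro y hy
    simp only [exits, mem_filter, mem_union] at hy ⊢
    by_cases hu : y * u ∈ Y
    · exact Or.inr ⟨hy.1, hu, hy.2⟩
    · exact Or.inl ⟨hy.1, hu⟩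
  have hshift : #(Y.filter fun y => y * u ∈ Y ∧ y * (u * v) ∉ Y) ≤ #(exits Y v) := by
    refine card_le_card_of_injOn (· * u) (fun y hy => ?_) (mul_left_injective u).injOn
    simp only [coe_filter, Set.mem_ofPred_eq, exits] at hy ⊢
    exact ⟨hy.2.1, by rw [mul_assoc]; exact hy.2.2⟩
  calc #(exits Y (u * v))
      ≤ #(exits Y u) + #(Y.filter fun y => y * u ∈ Y ∧ y * (u * v) ∉ Y) :=
        (card_le_card hsub).trans (card_union_le _ _)
    _ ≤ #(exits Y u) + #(exits Y v) := by gcongr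

theorem exits_image_mul_right (Y : Finset G) (t w : G) :
    exits (Y.image (· * t)) w = (exits Y (t * w * t⁻¹)).image (· * t) := by
  ext g
  simp only [exits, mem_filter, mem_image]
  constructor
  · rintro ⟨⟨y, hy, rfl⟩, hexit⟩
    exact ⟨y, ⟨hy, fun hin => hexit ⟨_, hin, by group⟩⟩, rfl⟩
  · rintro ⟨y, ⟨hy, hexit⟩, rfl⟩
    refine ⟨⟨y, hy, rfl⟩, ?_⟩
    rintro ⟨z, hz, hzw⟩
    obtain rfl : z = y * (t * w * t⁻¹) := by
      rw [← mul_assoc, ← mul_assoc, ← hzw, mul_inv_cancel_right]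
    exact hexit hz

theorem card_exits_image_mul_right (Y : Finset G) (t w : G) :
    #(exits (Y.image (· * t)) w) = #(exits Y (t * w * t⁻¹)) := by
  rw [exits_image_mul_right, card_image_of_injective _ (mul_left_injective t)]

end Exits

section Boundary

variable {G : Type*} [Group G] [DecidableEq G] {ι : Type*} [Fintype ι]

theorem card_cheegerBoundary (A : ι → G) (Y : Finset G) :
    Nat.card (cheegerBoundary A Y) = ∑ i, (#(exits Y (A i)) + #(exits Y (A i)⁻¹)) := by
  have hfin : cheegerBoundary A Y =
      ↑((Y ×ˢ (univ : Finset (ι × Bool))).filter fun e => e.1 * genOf A e.2 ∉ Y) := by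
    ext e
    simp [cheegerBoundary]
  rw [hfin, Nat.card_coe_set_eq, Set.ncard_coe_finset, card_filter, sum_product, sum_comm,
    Fintype.sum_prod_type]
  simp [exits, card_filter, genOf]

theorem card_cheegerBoundary_image_mul_right (A : ι → G) (Y : Finset G) (t : G) :
    Nat.card (cheegerBoundary A (Y.image (· * t))) =
      Nat.card (cheegerBoundary (fun i => t * A i * t⁻¹) Y) := by
  simp only [card_cheegerBoundary, card_exits_image_mul_right, mul_inv_rev, inv_inv, mul_assoc]

end Boundary

theorem cheegerConst_le_of_card_cheegerBoundary_image_le {G : Type*} [Group G] [DecidableEq G]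
    {ι κ : Type*} (A : ι → G) (B : κ → G) (t : G)
    (hAB : ∀ Y : Finset G, Nat.card (cheegerBoundary A (Y.image (· * t))) ≤
      Nat.card (cheegerBoundary B Y)) :
    cheegerConst A ≤ cheegerConst B := by
  have hbdd : BddBelow (Set.range fun Y : {Y : Finset G // Y.Nonempty} =>
      (Nat.card (cheegerBoundary A Y.1) : ℝ) / #Y.1) :=
    ⟨0, by rintro r ⟨Y, rfl⟩; positivity⟩
  have : Nonempty {Y : Finset G // Y.Nonempty} := ⟨⟨{1}, singleton_nonempty 1⟩⟩
  refine le_ciInf fun ⟨Y, hY⟩ => ?_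
  have hcard : #(Y.image (· * t)) = #Y := card_image_of_injective _ (mul_left_injective t)
  calc cheegerConst A
      ≤ (Nat.card (cheegerBoundary A (Y.image (· * t))) : ℝ) / #(Y.image (· * t)) :=
        ciInf_le hbdd ⟨_, hY.image _⟩
    _ ≤ (Nat.card (cheegerBoundary B Y) : ℝ) / #Y := by
        rw [hcard]; gcongr; exact_mod_cast hAB Y

theorem card_cheegerBoundary_mul_le {G : Type*} [Group G] [DecidableEq G] (a b c : G)
    (Y : Finset G) :
    Nat.card (cheegerBoundary ![a, a * c, b] Y) ≤ Nat.card (cheegerBoundary ![b, c, a, a] Y) := by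
  have hmul := card_exits_mul_le Y a c
  have hinv := card_exits_mul_le Y c⁻¹ a⁻¹
  rw [← mul_inv_rev] at hinv
  simp only [card_cheegerBoundary, Fin.sum_univ_three, Fin.sum_univ_four, Matrix.cons_val_zero,
    Matrix.cons_val_one, Matrix.cons_val_two, Matrix.cons_val_three, Matrix.head_cons,
    Matrix.tail_cons]
  omega

theorem cheegerConst_conj_le {G : Type*} [Group G] (a b : G) :
    cheegerConst ![a, b, a⁻¹ * b * a] ≤ cheegerConst ![b, b * a⁻¹, a, a] := by
  classical
  refine cheegerConst_le_of_card_cheegerBoundary_image_le _ _ a fun Y => ?_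
  have hconj : (fun i => a * ![a, b, a⁻¹ * b * a] i * a⁻¹) = ![a, a * (b * a⁻¹), b] := by
    funext i
    fin_cases i <;> simp <;> group
  rw [card_cheegerBoundary_image_mul_right, hconj]
  exact card_cheegerBoundary_mul_le a b (b * a⁻¹) Y

/-- If the Cheeger isoperimetric constant of Thompson's group `F` with
respect to the generating set `{x₀, x₁, x₂}` (where `x₂ = x₀⁻¹x₁x₀`) satisfies
`ι*(F; {x₀, x₁, x₂}) ≥ 1`, then the Cheeger isoperimetric constant of `F` with respect to
the generating multi-set `{x₁, x̄₁, x₀, x₀}` (where `x̄₁ = x₁x₀⁻¹` and `x₀` is taken with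
multiplicity two) satisfies `ι*(F; {x₁, x̄₁, x₀, x₀}) ≥ 1`. -/
theorem cheegerConst_multiset_ge_one_of_x₀x₁x₂_ge_one
    (h : 1 ≤ cheegerConst (![x₀, x₁, x₀⁻¹ * x₁ * x₀] : Fin 3 → ThompsonF)) :
    1 ≤ cheegerConst (![x₁, x₁ * x₀⁻¹, x₀, x₀] : Fin 4 → ThompsonF) :=
  h.trans (cheegerConst_conj_le x₀ x₁)
end

section
/- The assignment x₀ ↦ x₀⁻¹, x₁ ↦ x₁x₀⁻¹ extends to an automorphism of Thompson's group F, and this automorphism has order 2 (applying it twice gives the identity map). -/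
/-- The substitution `x₀ ↦ x₀⁻¹`, `x₁ ↦ x₁ x₀⁻¹` at the level of the free group. -/
def flipWord : Fin 2 → FreeGroup (Fin 2) :=
  ![(FreeGroup.of 0)⁻¹, FreeGroup.of 1 * (FreeGroup.of 0)⁻¹]

/-- The first relator. -/
def rel1 : FreeGroup (Fin 2) :=
  ((FreeGroup.of 0 ^ 2)⁻¹ * FreeGroup.of 1 * FreeGroup.of 0 ^ 2)⁻¹ *
     ((FreeGroup.of 0 * FreeGroup.of 1)⁻¹ * FreeGroup.of 1 *
       (FreeGroup.of 0 * FreeGroup.of 1))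

/-- The second relator. -/
def rel2 : FreeGroup (Fin 2) :=
  ((FreeGroup.of 0 ^ 3)⁻¹ * FreeGroup.of 1 * FreeGroup.of 0 ^ 3)⁻¹ *
     ((FreeGroup.of 0 ^ 2 * FreeGroup.of 1)⁻¹ * FreeGroup.of 1 *
       (FreeGroup.of 0 ^ 2 * FreeGroup.of 1))

lemma rel1_mem : rel1 ∈ thompsonRels := Or.inl rfl
lemma rel2_mem : rel2 ∈ thompsonRels := Or.inr rfl

/-- The image of `rel1` under the flip substitution is a conjugate of `rel1⁻¹`. -/
lemma flip_rel1 :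
    FreeGroup.lift flipWord rel1 = FreeGroup.of 0 ^ 3 * rel1⁻¹ * (FreeGroup.of 0 ^ 3)⁻¹ := by
  simp only [rel1, flipWord, map_mul, map_inv, map_pow, FreeGroup.lift_apply_of,
    Matrix.cons_val_zero, Matrix.cons_val_one, Matrix.head_cons]
  group

/-- The image of `rel2` under the flip substitution is a conjugate of `rel2⁻¹`. -/
lemma flip_rel2 :
    FreeGroup.lift flipWord rel2 = FreeGroup.of 0 ^ 4 * rel2⁻¹ * (FreeGroup.of 0 ^ 4)⁻¹ := by
  simp only [rel2, flipWord, map_mul, map_inv, map_pow, FreeGroup.lift_apply_of,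
    Matrix.cons_val_zero, Matrix.cons_val_one, Matrix.head_cons]
  group

/-- The flip map on the generators, with values in Thompson's group. -/
def flipGen : Fin 2 → ThompsonF := fun i => PresentedGroup.mk thompsonRels (flipWord i)

lemma lift_flipGen (r : FreeGroup (Fin 2)) :
    FreeGroup.lift flipGen r = PresentedGroup.mk thompsonRels (FreeGroup.lift flipWord r) := by
  have : FreeGroup.lift flipGen =
      (PresentedGroup.mk thompsonRels).comp (FreeGroup.lift flipWord) := by
    ext i
    simp [flipGen]
  rw [this]; rfl

lemma mk_conj_rel_inv_eq_one {r : FreeGroup (Fin 2)} (hr : r ∈ thompsonRels)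
    (c : FreeGroup (Fin 2)) :
    PresentedGroup.mk thompsonRels (c * r⁻¹ * c⁻¹) = 1 := by
  have hmem : c * r⁻¹ * c⁻¹ ∈ Subgroup.normalClosure thompsonRels := by
    have h1 : r⁻¹ ∈ Subgroup.normalClosure thompsonRels :=
      Subgroup.inv_mem _ (Subgroup.subset_normalClosure hr)
    simpa [mul_assoc] using (Subgroup.normalClosure_normal (s := thompsonRels)).conj_mem _ h1 c
  exact (QuotientGroup.eq_one_iff _).2 hmem

lemma flip_rels_eq_one : ∀ r ∈ thompsonRels, FreeGroup.lift flipGen r = 1 := by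
  intro r hr
  rcases hr with h | h
  · rw [show r = rel1 from h, lift_flipGen, flip_rel1]
    exact mk_conj_rel_inv_eq_one rel1_mem _
  · rw [show r = rel2 from h, lift_flipGen, flip_rel2]
    exact mk_conj_rel_inv_eq_one rel2_mem _

/-- The flip as a homomorphism of Thompson's group. -/
def flipHom : ThompsonF →* ThompsonF := PresentedGroup.toGroup flip_rels_eq_one

lemma flipHom_x₀ : flipHom x₀ = x₀⁻¹ := by
  show flipHom (PresentedGroup.of 0) = x₀⁻¹
  rw [flipHom, PresentedGroup.toGroup.of]
  show PresentedGroup.mk thompsonRels (FreeGroup.of 0)⁻¹ = x₀⁻¹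
  rw [map_inv]; rfl

lemma flipHom_x₁ : flipHom x₁ = x₁ * x₀⁻¹ := by
  show flipHom (PresentedGroup.of 1) = x₁ * x₀⁻¹
  rw [flipHom, PresentedGroup.toGroup.of]
  show PresentedGroup.mk thompsonRels (FreeGroup.of 1 * (FreeGroup.of 0)⁻¹) = x₁ * x₀⁻¹
  rw [map_mul, map_inv]; rfl

lemma flipHom_comp : flipHom.comp flipHom = MonoidHom.id ThompsonF := by
  ext i
  fin_cases i
  · show flipHom (flipHom x₀) = x₀
    rw [flipHom_x₀, map_inv, flipHom_x₀, inv_inv]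
  · show flipHom (flipHom x₁) = x₁
    rw [flipHom_x₁, map_mul, map_inv, flipHom_x₁, flipHom_x₀, inv_inv]
    group

/-- The assignment `x₀ ↦ x₀⁻¹`, `x₁ ↦ x₁x₀⁻¹` extends to an automorphism
of Thompson's group `F`, and this automorphism has order `2` (applying it twice gives the
identity map). -/
theorem exists_automorphism_thompsonF_order_two :
    ∃ φ : ThompsonF ≃* ThompsonF,
      φ x₀ = x₀⁻¹ ∧ φ x₁ = x₁ * x₀⁻¹ ∧ ∀ g : ThompsonF, φ (φ g) = g := by
  refine ⟨MonoidHom.toMulEquiv flipHom flipHom flipHom_comp flipHom_comp,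
    flipHom_x₀, flipHom_x₁, fun g => ?_⟩
  show flipHom (flipHom g) = g
  exact DFunLike.congr_fun flipHom_comp g
end

section
/- In Thompson's group F, let α = x₁⁻¹ and β = x₀x₁⁻¹. Then for all positive integers m and n, the elements α^{βᵐ} and β^{αⁿ} commute, where a^b denotes b⁻¹ab. -/
private lemma rel_one {r : FreeGroup (Fin 2)} (h : r ∈ thompsonRels) :
    PresentedGroup.mk thompsonRels r = 1 := by
  have : r ∈ Subgroup.normalClosure thompsonRels := Subgroup.subset_normalClosure h
  exact (QuotientGroup.eq_one_iff r).mpr this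

private lemma rel1_s17 : (x₀ ^ 2)⁻¹ * x₁ * x₀ ^ 2 = (x₀ * x₁)⁻¹ * x₁ * (x₀ * x₁) := by
  have h := rel_one (Set.mem_insert _ _)
  simp only [map_mul, map_inv, map_pow] at h
  have h' : ((x₀ ^ 2)⁻¹ * x₁ * x₀ ^ 2)⁻¹ * ((x₀ * x₁)⁻¹ * x₁ * (x₀ * x₁)) = 1 := h
  exact (inv_mul_eq_one.mp h')

private lemma rel2_s17 : (x₀ ^ 3)⁻¹ * x₁ * x₀ ^ 3 = (x₀ ^ 2 * x₁)⁻¹ * x₁ * (x₀ ^ 2 * x₁) := by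
  have h := rel_one (Set.mem_insert_of_mem _ rfl)
  simp only [map_mul, map_inv, map_pow] at h
  have h' : ((x₀ ^ 3)⁻¹ * x₁ * x₀ ^ 3)⁻¹ * ((x₀ ^ 2 * x₁)⁻¹ * x₁ * (x₀ ^ 2 * x₁)) = 1 := h
  exact (inv_mul_eq_one.mp h')

/-- `y j` is the generator `x_{j+1}` of the infinite presentation of `F`. -/
private def y (j : ℕ) : ThompsonF := (x₀ ^ j)⁻¹ * x₁ * x₀ ^ j

private lemma y0_eq : y 0 = x₁ := by simp [y]

private lemma yd (j : ℕ) : y (j + 1) = x₀⁻¹ * y j * x₀ := by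
  simp only [y, pow_succ]; group

/-- Conjugating a relation `yᵢ⁻¹ yⱼ yᵢ = y_{j+1}` by `x₀` shifts all indices. -/
private lemma conjStep {i j : ℕ} (h : (y i)⁻¹ * y j * y i = y (j + 1)) :
    (y (i + 1))⁻¹ * y (j + 1) * y (i + 1) = y (j + 2) := by
  rw [yd i, yd j, yd (j + 1), ← h]; group

private lemma C1 : (y 0)⁻¹ * y 1 * y 0 = y 2 := by
  have h := rel1_s17
  simp only [y, pow_zero, pow_one]
  calc (1⁻¹ * x₁ * 1)⁻¹ * (x₀⁻¹ * x₁ * x₀) * (1⁻¹ * x₁ * 1)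
      = (x₀ * x₁)⁻¹ * x₁ * (x₀ * x₁) := by group
    _ = (x₀ ^ 2)⁻¹ * x₁ * x₀ ^ 2 := h.symm

private lemma C2 : (y 0)⁻¹ * y 2 * y 0 = y 3 := by
  have h := rel2_s17
  simp only [y, pow_zero]
  calc (1⁻¹ * x₁ * 1)⁻¹ * ((x₀ ^ 2)⁻¹ * x₁ * x₀ ^ 2) * (1⁻¹ * x₁ * 1)
      = (x₀ ^ 2 * x₁)⁻¹ * x₁ * (x₀ ^ 2 * x₁) := by group
    _ = (x₀ ^ 3)⁻¹ * x₁ * x₀ ^ 3 := h.symm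

private lemma C : ∀ j, 1 ≤ j → (y 0)⁻¹ * y j * y 0 = y (j + 1) := by
  intro j
  induction j using Nat.strong_induction_on with
  | _ j ih =>
    intro hj
    match j, hj with
    | 1, _ => exact C1
    | 2, _ => exact C2
    | (k + 3), _ =>
      have h1 : (y 0)⁻¹ * y (k + 2) * y 0 = y (k + 3) := ih (k + 2) (by omega) (by omega)
      have h2 : (y 0)⁻¹ * y (k + 1) * y 0 = y (k + 2) := ih (k + 1) (by omega) (by omega)
      have K1a : (y 1)⁻¹ * y (k + 2) * y 1 = y (k + 3) := conjStep h2
      have K2 : (y 2)⁻¹ * y (k + 3) * y 2 = y (k + 4) := conjStep K1a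
      calc (y 0)⁻¹ * y (k + 3) * y 0
          = (y 0)⁻¹ * ((y 1)⁻¹ * y (k + 2) * y 1) * y 0 := by rw [K1a]
        _ = ((y 0)⁻¹ * y 1 * y 0)⁻¹ * ((y 0)⁻¹ * y (k + 2) * y 0) * ((y 0)⁻¹ * y 1 * y 0) := by
            group
        _ = (y 2)⁻¹ * y (k + 3) * y 2 := by rw [C1, h1]
        _ = y (k + 4) := K2

private lemma K1 (i : ℕ) (hi : 2 ≤ i) : (y 1)⁻¹ * y i * y 1 = y (i + 1) := by
  match i, hi with
  | (k + 2), _ => exact conjStep (C (k + 1) (by omega))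

private lemma S (k : ℕ) : ∀ j, 1 ≤ j → ((y 0) ^ k)⁻¹ * y j * (y 0) ^ k = y (j + k) := by
  induction k with
  | zero => intro j _; simp
  | succ k ihk =>
    intro j hj
    have : ((y 0) ^ (k + 1))⁻¹ * y j * (y 0) ^ (k + 1)
        = (y 0)⁻¹ * (((y 0) ^ k)⁻¹ * y j * (y 0) ^ k) * y 0 := by
      rw [pow_succ]; group
    rw [this, ihk j hj, C (j + k) (by omega), Nat.add_assoc]

private lemma Sinv (k : ℕ) (j : ℕ) (hj : 1 ≤ j) :
    (y 0) ^ k * y (j + k) * ((y 0) ^ k)⁻¹ = y j := by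
  rw [← S k j hj]; group

/-- `w m = y 0 * y 1 * ⋯ * y (m-1)`. -/
private def w : ℕ → ThompsonF
  | 0 => 1
  | m + 1 => w m * y m

private lemma betaw (m : ℕ) : (x₀ * x₁⁻¹)⁻¹ * w m = w (m + 1) * x₀⁻¹ := by
  induction m with
  | zero => simp [w, y]
  | succ m ih =>
    have : (x₀ * x₁⁻¹)⁻¹ * w (m + 1) = ((x₀ * x₁⁻¹)⁻¹ * w m) * y m := by
      rw [w]; group
    rw [this, ih, w, w]
    have hy : x₀⁻¹ * y m = y (m + 1) * x₀⁻¹ := by rw [yd m]; group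
    calc w (m + 1) * x₀⁻¹ * y m = w (m + 1) * (x₀⁻¹ * y m) := by group
      _ = w (m + 1) * (y (m + 1) * x₀⁻¹) := by rw [hy]
      _ = w (m + 1) * y (m + 1) * x₀⁻¹ := by group

private lemma A (m : ℕ) :
    ((x₀ * x₁⁻¹) ^ m)⁻¹ * y 0 * (x₀ * x₁⁻¹) ^ m = w m * y m * (w m)⁻¹ := by
  induction m with
  | zero => simp [w]
  | succ m ih =>
    have step : ((x₀ * x₁⁻¹) ^ (m + 1))⁻¹ * y 0 * (x₀ * x₁⁻¹) ^ (m + 1)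
        = (x₀ * x₁⁻¹)⁻¹ * (((x₀ * x₁⁻¹) ^ m)⁻¹ * y 0 * (x₀ * x₁⁻¹) ^ m) * (x₀ * x₁⁻¹) := by
      rw [pow_succ]; group
    rw [step, ih]
    have hb := betaw m
    calc (x₀ * x₁⁻¹)⁻¹ * (w m * y m * (w m)⁻¹) * (x₀ * x₁⁻¹)
        = ((x₀ * x₁⁻¹)⁻¹ * w m) * y m * ((x₀ * x₁⁻¹)⁻¹ * w m)⁻¹ := by group
      _ = (w (m + 1) * x₀⁻¹) * y m * (w (m + 1) * x₀⁻¹)⁻¹ := by rw [hb]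
      _ = w (m + 1) * (x₀⁻¹ * y m * x₀) * (w (m + 1))⁻¹ := by group
      _ = w (m + 1) * y (m + 1) * (w (m + 1))⁻¹ := by rw [← yd]

section FinalPart
variable (n : ℕ)

/-- `Y = β^{αⁿ} = x₁ⁿ x₀ x₁^{-(n+1)}`. -/
private def Yel (n : ℕ) : ThompsonF := (y 0) ^ n * x₀ * ((y 0) ^ (n + 1))⁻¹

private lemma Yfix (j : ℕ) (hj : 1 ≤ j) : (Yel n)⁻¹ * y j * Yel n = y j := by
  have h1 : ((y 0) ^ n)⁻¹ * y j * (y 0) ^ n = y (j + n) := S n j hj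
  have h2 : x₀⁻¹ * y (j + n) * x₀ = y (j + n + 1) := (yd (j + n)).symm
  have h3 : (y 0) ^ (n + 1) * y (j + n + 1) * ((y 0) ^ (n + 1))⁻¹ = y j := by
    have := Sinv (n + 1) j hj
    rwa [show j + (n + 1) = j + n + 1 by omega] at this
  calc (Yel n)⁻¹ * y j * Yel n
      = (y 0) ^ (n + 1) * (x₀⁻¹ * (((y 0) ^ n)⁻¹ * y j * (y 0) ^ n) * x₀) *
        ((y 0) ^ (n + 1))⁻¹ := by unfold Yel; group
    _ = y j := by rw [h1, h2, h3]

/-- `g = y0⁻¹ (Y⁻¹ y0 Y)`. -/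
private def gel (n : ℕ) : ThompsonF := (y 0) ^ n * y 1 * ((y 0) ^ (n + 1))⁻¹

private lemma zY : (Yel n)⁻¹ * y 0 * Yel n = y 0 * gel n := by
  have h : x₀⁻¹ * y 0 * x₀ = y 1 := (yd 0).symm
  calc (Yel n)⁻¹ * y 0 * Yel n
      = (y 0) ^ (n + 1) * (x₀⁻¹ * y 0 * x₀) * ((y 0) ^ (n + 1))⁻¹ := by
        unfold Yel; group
    _ = (y 0) ^ (n + 1) * y 1 * ((y 0) ^ (n + 1))⁻¹ := by rw [h]
    _ = y 0 * gel n := by unfold gel; rw [pow_succ']; group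

private lemma gfix (hn : 1 ≤ n) (j : ℕ) (hj : 1 ≤ j) :
    gel n * y j * (gel n)⁻¹ = y j := by
  have h1 : ((y 0) ^ (n + 1))⁻¹ * y j * (y 0) ^ (n + 1) = y (j + n + 1) := by
    have := S (n + 1) j hj
    rwa [show j + (n + 1) = j + n + 1 by omega] at this
  have h2 : y 1 * y (j + n + 1) * (y 1)⁻¹ = y (j + n) := by
    have := K1 (j + n) (by omega)
    rw [← this]; group
  have h3 : (y 0) ^ n * y (j + n) * ((y 0) ^ n)⁻¹ = y j := Sinv n j hj
  calc gel n * y j * (gel n)⁻¹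
      = (y 0) ^ n * (y 1 * (((y 0) ^ (n + 1))⁻¹ * y j * (y 0) ^ (n + 1)) * (y 1)⁻¹) *
        ((y 0) ^ n)⁻¹ := by unfold gel; group
    _ = y j := by rw [h1, h2, h3]

end FinalPart

/-- `ws k = y 1 * y 2 * ⋯ * y k`. -/
private def ws : ℕ → ThompsonF
  | 0 => 1
  | k + 1 => ws k * y (k + 1)

private lemma w_eq_ws (m : ℕ) : w (m + 1) = y 0 * ws m := by
  induction m with
  | zero => simp [w, ws]
  | succ m ih => rw [w, ih, ws]; group

private lemma Yfix_ws (n k : ℕ) : (Yel n)⁻¹ * ws k * Yel n = ws k := by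
  induction k with
  | zero => simp [ws]
  | succ k ih =>
    calc (Yel n)⁻¹ * ws (k + 1) * Yel n
        = ((Yel n)⁻¹ * ws k * Yel n) * ((Yel n)⁻¹ * y (k + 1) * Yel n) := by rw [ws]; group
      _ = ws (k + 1) := by rw [ih, Yfix n (k + 1) (by omega), ws]

private lemma gfix_ws (n : ℕ) (hn : 1 ≤ n) (k : ℕ) : gel n * ws k * (gel n)⁻¹ = ws k := by
  induction k with
  | zero => simp [ws]
  | succ k ih =>
    calc gel n * ws (k + 1) * (gel n)⁻¹
        = (gel n * ws k * (gel n)⁻¹) * (gel n * y (k + 1) * (gel n)⁻¹) := by rw [ws]; group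
      _ = ws (k + 1) := by rw [ih, gfix n hn (k + 1) (by omega), ws]

/-- In Thompson's group `F`, let `α = x₁⁻¹` and `β = x₀x₁⁻¹`. Then for
all positive integers `m` and `n`, the elements `α^{βᵐ}` and `β^{αⁿ}` commute, where
`a^b = b⁻¹ab`. -/
theorem commute_conj_powers_thompsonF (m n : ℕ) (hm : 0 < m) (hn : 0 < n) :
    Commute
      (((x₀ * x₁⁻¹ : ThompsonF) ^ m)⁻¹ * x₁⁻¹ * (x₀ * x₁⁻¹) ^ m)
      (((x₁⁻¹ : ThompsonF) ^ n)⁻¹ * (x₀ * x₁⁻¹) * (x₁⁻¹) ^ n) := by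
  obtain ⟨k, rfl⟩ : ∃ k, m = k + 1 := ⟨m - 1, by omega⟩
  set X : ThompsonF := ((x₀ * x₁⁻¹) ^ (k + 1))⁻¹ * x₁⁻¹ * (x₀ * x₁⁻¹) ^ (k + 1) with hX
  set Y : ThompsonF := ((x₁⁻¹ : ThompsonF) ^ n)⁻¹ * (x₀ * x₁⁻¹) * (x₁⁻¹) ^ n with hY
  -- rewrite Y as Yel n
  have hYeq : Y = Yel n := by
    rw [hY]; unfold Yel; rw [y0_eq]; group
  -- rewrite X using A
  have hA := A (k + 1)
  have hXeq : X = y 0 * (ws k * (y (k + 1))⁻¹ * (ws k)⁻¹) * (y 0)⁻¹ := by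
    have hXinv : X = (((x₀ * x₁⁻¹) ^ (k + 1))⁻¹ * y 0 * (x₀ * x₁⁻¹) ^ (k + 1))⁻¹ := by
      rw [hX, y0_eq]; group
    rw [hXinv, hA, w_eq_ws]; group
  set stuff : ThompsonF := ws k * (y (k + 1))⁻¹ * (ws k)⁻¹ with hstuff
  have hYstuff : (Yel n)⁻¹ * stuff * Yel n = stuff := by
    calc (Yel n)⁻¹ * stuff * Yel n
        = ((Yel n)⁻¹ * ws k * Yel n) * ((Yel n)⁻¹ * y (k + 1) * Yel n)⁻¹ *
          ((Yel n)⁻¹ * ws k * Yel n)⁻¹ := by rw [hstuff]; group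
      _ = stuff := by rw [Yfix_ws, Yfix n (k + 1) (by omega)]
  have hgstuff : gel n * stuff * (gel n)⁻¹ = stuff := by
    calc gel n * stuff * (gel n)⁻¹
        = (gel n * ws k * (gel n)⁻¹) * (gel n * y (k + 1) * (gel n)⁻¹)⁻¹ *
          (gel n * ws k * (gel n)⁻¹)⁻¹ := by rw [hstuff]; group
      _ = stuff := by rw [gfix_ws n hn, gfix n hn (k + 1) (by omega)]
  have key : (Yel n)⁻¹ * X * Yel n = X := by
    calc (Yel n)⁻¹ * X * Yel n
        = ((Yel n)⁻¹ * y 0 * Yel n) * ((Yel n)⁻¹ * stuff * Yel n) *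
          ((Yel n)⁻¹ * y 0 * Yel n)⁻¹ := by rw [hXeq]; group
      _ = (y 0 * gel n) * stuff * (y 0 * gel n)⁻¹ := by rw [zY, hYstuff]
      _ = y 0 * (gel n * stuff * (gel n)⁻¹) * (y 0)⁻¹ := by group
      _ = X := by rw [hgstuff, hXeq]
  show X * Y = Y * X
  rw [hYeq]
  calc X * Yel n = Yel n * ((Yel n)⁻¹ * X * Yel n) := by group
    _ = Yel n * X := by rw [key]
end

section
/- Let G be a group with finite generating set A. Then G is non-amenable if and only if G admits a doubling function, i.e. a map ψ : G → G such that the word-metric distances d(g, ψ(g)) are bounded above by a constant K > 0 over all g ∈ G, and every element of G has at least two preimages under ψ. -/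
/-!
If `ψ` is a doubling function, choose two sections `f₁ f₂` of `ψ`; their images are disjoint, and
each section moves points by right multiplication with one of finitely many elements, so
splitting `G` according to that element shows that a right-invariant mean gives each image
mass `1`, hence their union mass `2`.

Conversely, if for some radius `K` every finite `F` satisfies `|F B_K| ≥ 2|F|`, Hall's marriage
theorem matches every `g` twice, injectively, into `g B_K`, and the left inverse of that
matching is a doubling function. Otherwise, for each `k` some `F` has `|F B_k| < 2|F|`, so one
of the sets `F B_j` grows by a factor at most `1 + 1/k` under one more letter. These sets form
a Følner sequence for the right action, and an ultrafilter limit of densities along it is an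
invariant mean.
-/

open Finset MeasureTheory Filter Topology
open scoped Pointwise symmDiff ENNReal

section Words

variable {G : Type*} [Group G] {ι : Type*} (A : ι → G)

lemma inv_genOf (p : ι × Bool) : (genOf A p)⁻¹ = genOf A (p.1, !p.2) := by
  obtain ⟨i, _ | _⟩ := p <;> simp [genOf]

variable [DecidableEq G] [Fintype ι]

-- Contains `1`, so that `wordLetters A ^ k` is the whole ball of radius `k`.
def wordLetters : Finset G := insert 1 (univ.image (genOf A))

def wordBall (k : ℕ) : Finset G := wordLetters A ^ k

lemma genOf_mem_wordLetters (p : ι × Bool) : genOf A p ∈ wordLetters A :=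
  mem_insert_of_mem (mem_image_of_mem _ (mem_univ p))

lemma one_mem_wordLetters : (1 : G) ∈ wordLetters A := mem_insert_self _ _

lemma one_mem_wordBall (k : ℕ) : (1 : G) ∈ wordBall A k := one_mem_pow (one_mem_wordLetters A)

lemma inv_wordLetters : (wordLetters A)⁻¹ = wordLetters A := by
  suffices h : (wordLetters A)⁻¹ ⊆ wordLetters A from
    h.antisymm (by simpa using Finset.inv_subset_inv h)
  intro g hg
  rw [wordLetters, inv_insert, inv_one, mem_insert, mem_inv'] at hg
  obtain rfl | hg := hg
  · exact one_mem_wordLetters A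
  · obtain ⟨p, -, hp⟩ := mem_image.1 hg
    rw [← inv_inv g, ← hp, inv_genOf]
    exact genOf_mem_wordLetters A _

lemma inv_wordBall (k : ℕ) : (wordBall A k)⁻¹ = wordBall A k := by
  rw [wordBall, ← inv_pow, inv_wordLetters]

lemma mem_wordBall_iff {k : ℕ} {g : G} :
    g ∈ wordBall A k ↔ ∃ l : List (ι × Bool), l.length ≤ k ∧ g = (l.map (genOf A)).prod := by
  constructor
  · induction k generalizing g with
    | zero => simp [wordBall]
    | succ k ih =>
      intro hg
      rw [wordBall, pow_succ] at hg
      obtain ⟨x, hx, s, hs, rfl⟩ := mem_mul.1 hg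
      obtain ⟨l, hl, rfl⟩ := ih hx
      obtain rfl | hs := mem_insert.1 hs
      · exact ⟨l, by omega, mul_one _⟩
      · obtain ⟨p, -, rfl⟩ := mem_image.1 hs
        exact ⟨l ++ [p], by simpa using hl, by simp⟩
  · rintro ⟨l, hl, rfl⟩
    induction l generalizing k with
    | nil => exact one_mem_wordBall A k
    | cons p l ih =>
      obtain ⟨k, rfl⟩ : ∃ k', k = k' + 1 := Nat.exists_eq_add_one.2 (by simp at hl; omega)
      rw [wordBall, pow_succ', List.map_cons, List.prod_cons]
      exact mul_mem_mul (genOf_mem_wordLetters A p) (ih (by simpa using hl))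

lemma closure_wordLetters (hA : Subgroup.closure (Set.range A) = ⊤) :
    Subgroup.closure (wordLetters A : Set G) = ⊤ :=
  eq_top_mono (Subgroup.closure_mono (Set.range_subset_iff.2 fun i ↦
    genOf_mem_wordLetters A (i, true))) hA

end Words

section FinitelyAdditive

variable {α : Type*} {μ : Set α → ℝ}

lemma apply_biUnion_finset_eq_sum
    (hadd : ∀ Z₁ Z₂ : Set α, Disjoint Z₁ Z₂ → μ (Z₁ ∪ Z₂) = μ Z₁ + μ Z₂)
    {γ : Type*} (s : Finset γ) {X : γ → Set α} (hX : (s : Set γ).PairwiseDisjoint X) :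
    μ (⋃ d ∈ s, X d) = ∑ d ∈ s, μ (X d) := by
  classical
  induction s using Finset.induction_on with
  | empty =>
    have h := hadd ∅ ∅ (Set.disjoint_empty _)
    rw [Set.union_empty] at h
    simpa using h
  | insert a s ha ih =>
    rw [coe_insert, Set.pairwiseDisjoint_insert] at hX
    rw [set_biUnion_insert, sum_insert ha, ← ih hX.1, hadd]
    exact Set.disjoint_iUnion₂_right.2 fun b hb ↦ hX.2 b hb (ne_of_mem_of_not_mem hb ha).symm

end FinitelyAdditive

section NotAmenable

variable {G : Type*} [Group G] {μ : Set G → ℝ}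

lemma mean_range_eq_mean_univ
    (hadd : ∀ Z₁ Z₂ : Set G, Disjoint Z₁ Z₂ → μ (Z₁ ∪ Z₂) = μ Z₁ + μ Z₂)
    (hinv : ∀ (Z : Set G) (g : G), μ ((· * g) '' Z) = μ Z)
    {f : G → G} (hf : Function.Injective f) (D : Finset G) (hD : ∀ h, h⁻¹ * f h ∈ D) :
    μ (Set.range f) = μ Set.univ := by
  set X : G → Set G := fun d ↦ {h | h⁻¹ * f h = d}
  have hX : (D : Set G).PairwiseDisjoint X :=
    fun a _ b _ hab ↦ Set.disjoint_left.2 fun h (ha : _ = a) (hb : _ = b) ↦ hab (ha ▸ hb)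
  have hcover : (⋃ d ∈ D, X d) = Set.univ :=
    Set.eq_univ_of_forall fun h ↦ Set.mem_biUnion (hD h) rfl
  have himage : ∀ d, f '' X d = (· * d) '' X d := fun d ↦
    Set.image_congr fun h (hh : _ = d) ↦ by rw [← hh, mul_inv_cancel_left]
  rw [← Set.image_univ, ← hcover, Set.image_iUnion₂,
    apply_biUnion_finset_eq_sum hadd D
      fun a ha b hb hab ↦ Set.disjoint_image_of_injective hf (hX ha hb hab),
    apply_biUnion_finset_eq_sum hadd D hX]
  exact sum_congr rfl fun d _ ↦ by rw [himage, hinv]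

lemma not_isAmenable_of_exists_doubling (D : Finset G) (ψ : G → G) (hψ : ∀ g, g⁻¹ * ψ g ∈ D)
    (htwo : ∀ h, ∃ g₁ g₂, g₁ ≠ g₂ ∧ ψ g₁ = h ∧ ψ g₂ = h) : ¬ IsAmenable G := by
  classical
  rintro ⟨μ, hbound, huniv, hadd, hinv⟩
  choose f₁ f₂ hne hf₁ hf₂ using htwo
  have hsection : ∀ f : G → G, (∀ h, ψ (f h) = h) → μ (Set.range f) = 1 := fun f hf ↦ by
    rw [← huniv]
    refine mean_range_eq_mean_univ hadd hinv (Function.LeftInverse.injective hf) D⁻¹ fun h ↦ ?_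
    simpa [mem_inv', hf h] using hψ (f h)
  have hdisj : Disjoint (Set.range f₁) (Set.range f₂) := by
    rw [Set.disjoint_left]
    rintro _ ⟨a, rfl⟩ ⟨b, hb⟩
    obtain rfl : b = a := by rw [← hf₁ a, ← hb, hf₂]
    exact hne b hb.symm
  have h2 : μ (Set.range f₁ ∪ Set.range f₂) = 2 := by
    rw [hadd _ _ hdisj, hsection f₁ hf₁, hsection f₂ hf₂]
    norm_num
  linarith [(hbound (Set.range f₁ ∪ Set.range f₂)).2]

end NotAmenable

lemma exists_injective_prod_bool_of_two_mul_card_le {α β : Type*} [DecidableEq β]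
    (t : α → Finset β) (ht : ∀ s : Finset α, 2 * #s ≤ #(s.biUnion t)) :
    ∃ Φ : α × Bool → β, Function.Injective Φ ∧ ∀ p, Φ p ∈ t p.1 := by
  classical
  refine (all_card_le_biUnion_card_iff_exists_injective (t ∘ Prod.fst)).1 fun T ↦ ?_
  calc #T ≤ #(T.image Prod.fst ×ˢ (univ : Finset Bool)) :=
        card_le_card fun p hp ↦ mem_product.2 ⟨mem_image_of_mem _ hp, mem_univ _⟩
    _ = 2 * #(T.image Prod.fst) := by rw [card_product, card_univ, Fintype.card_bool, mul_comm]
    _ ≤ #((T.image Prod.fst).biUnion t) := ht _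
    _ = #(T.biUnion (t ∘ Prod.fst)) := by rw [image_biUnion]; rfl

lemma exists_doubling_of_two_mul_card_le {G : Type*} [Group G] [DecidableEq G] (D : Finset G)
    (hD : ∀ F : Finset G, 2 * #F ≤ #(F * D)) :
    ∃ ψ : G → G, (∀ g, g⁻¹ * ψ g ∈ insert 1 D⁻¹) ∧
      ∀ h, ∃ g₁ g₂, g₁ ≠ g₂ ∧ ψ g₁ = h ∧ ψ g₂ = h := by
  obtain ⟨Φ, hΦ, hΦD⟩ := exists_injective_prod_bool_of_two_mul_card_le (fun g : G ↦ g • D)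
    fun F ↦ by rw [biUnion_smul_finset]; exact hD F
  refine ⟨Function.extend Φ Prod.fst id, fun g ↦ ?_, fun h ↦ ?_⟩
  · by_cases hg : ∃ p, Φ p = g
    · obtain ⟨p, rfl⟩ := hg
      obtain ⟨d, hd, hpd⟩ := mem_smul_finset.1 (hΦD p)
      rw [hΦ.extend_apply, ← hpd, smul_eq_mul, mul_inv_rev, inv_mul_cancel_right]
      exact mem_insert_of_mem (inv_mem_inv hd)
    · rw [Function.extend_apply' _ _ _ hg, id, inv_mul_cancel]
      exact mem_insert_self _ _
  · exact ⟨Φ (h, false), Φ (h, true), hΦ.ne (by simp), hΦ.extend_apply _ _ _, hΦ.extend_apply _ _ _⟩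

lemma exists_card_mul_le_of_card_mul_pow_lt {M : Type*} [Monoid M] [DecidableEq M]
    (F S : Finset M) {k : ℕ} (hk : 0 < k) (h : #(F * S ^ k) < 2 * #F) :
    ∃ j, (#(F * S ^ j * S) : ℝ) ≤ (1 + 1 / k) * #(F * S ^ j) := by
  by_contra! hgrow
  have hpow : ∀ j, (1 + 1 / (k : ℝ)) ^ j * #F ≤ #(F * S ^ j) := by
    intro j
    induction j with
    | zero => simp
    | succ j ih =>
      calc (1 + 1 / (k : ℝ)) ^ (j + 1) * #F = (1 + 1 / k) * ((1 + 1 / k) ^ j * #F) := by ring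
        _ ≤ (1 + 1 / k) * #(F * S ^ j) := by gcongr
        _ ≤ #(F * S ^ j * S) := (hgrow j).le
        _ = #(F * S ^ (j + 1)) := by rw [pow_succ, mul_assoc]
  have hbernoulli : 2 ≤ (1 + 1 / (k : ℝ)) ^ k := by
    have hk' : (0 : ℝ) ≤ 1 / k := by positivity
    have := one_add_mul_le_pow (a := 1 / (k : ℝ)) (by linarith) k
    rwa [mul_one_div_cancel (by positivity), one_add_one_eq_two] at this
  have hlt : (#(F * S ^ k) : ℝ) < 2 * #F := by exact_mod_cast h
  nlinarith [hpow k, (#F).cast_nonneg (α := ℝ)]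

section Foelner

variable {M X ι : Type*} [Group M] [MulAction M X] [MeasurableSpace X] {μ : Measure X}
  [SMulInvariantMeasure M X μ] {l : Filter ι} {F : ι → Set X}

lemma isFoelner_of_closure_eq_top {S : Set M} (hS : Subgroup.closure S = ⊤)
    (hmeas : ∀ᶠ i in l, MeasurableSet (F i)) (hne : ∀ᶠ i in l, μ (F i) ≠ 0)
    (hfin : ∀ᶠ i in l, μ (F i) ≠ ∞)
    (hgen : ∀ s ∈ S, Tendsto (fun i ↦ μ ((s • F i) ∆ F i) / μ (F i)) l (𝓝 0)) :
    IsFoelner M μ l F := by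
  refine ⟨hmeas, hne, hfin, fun g ↦ ?_⟩
  induction (hS ▸ Subgroup.mem_top g : g ∈ Subgroup.closure S) using Subgroup.closure_induction
    with
  | mem s hs => exact hgen s hs
  | one => simp [tendsto_const_nhds]
  | mul x y _ _ hx hy =>
    refine tendsto_of_tendsto_of_tendsto_of_le_of_le tendsto_const_nhds
      (by simpa using hy.add hx) (fun _ ↦ zero_le) fun i ↦ ?_
    rw [← ENNReal.add_div]
    gcongr
    calc μ (((x * y) • F i) ∆ F i)
      _ ≤ μ (((x * y) • F i) ∆ (x • F i) ∪ (x • F i) ∆ F i) :=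
          measure_mono (symmDiff_triangle _ _ _)
      _ ≤ μ (((x * y) • F i) ∆ (x • F i)) + μ ((x • F i) ∆ F i) := measure_union_le _ _
      _ = μ ((y • F i) ∆ F i) + μ ((x • F i) ∆ F i) := by
          rw [mul_smul, ← Set.smul_set_symmDiff, measure_smul]
  | inv x _ hx =>
    refine hx.congr fun i ↦ ?_
    rw [← measure_smul μ x ((x⁻¹ • F i) ∆ F i), Set.smul_set_symmDiff, smul_inv_smul,
      symmDiff_comm]

end Foelner

section Amenable

variable {G : Type*} [Group G]

lemma card_smul_symmDiff_add_le [DecidableEq G] {E S : Finset G} (hS1 : 1 ∈ S) {s : Gᵐᵒᵖ}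
    (hs : s.unop ∈ S) : #((s • E) ∆ E) + 2 * #E ≤ 2 * #(E * S) := by
  have hsub : s • E ⊆ E * S := fun x hx ↦ by
    obtain ⟨y, hy, rfl⟩ := mem_smul_finset.1 hx
    rw [MulOpposite.smul_eq_mul_unop]
    exact mul_mem_mul hy hs
  have hsdiff : #(s • E \ E) = #(E \ s • E) := card_sdiff_comm (card_smul_finset _ _)
  have hsymm : #((s • E) ∆ E) ≤ #(s • E \ E) + #(E \ s • E) := by
    rw [symmDiff_def]
    exact card_union_le _ _
  have hout : #(s • E \ E) + #E ≤ #(E * S) := by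
    rw [← card_union_of_disjoint sdiff_disjoint]
    exact card_le_card (union_subset (sdiff_subset.trans hsub) (subset_mul_left E hS1))
  omega

lemma isFoelner_count_of_card_mul_le [DecidableEq G] [MeasurableSpace G]
    [DiscreteMeasurableSpace G] {S : Finset G} (hS1 : 1 ∈ S)
    (hS : Subgroup.closure (S : Set G) = ⊤) {ι : Type*} {l : Filter ι} {E : ι → Finset G}
    (hE : ∀ i, (E i).Nonempty) {ε : ι → ℝ} (hε : Tendsto ε l (𝓝 0))
    (hES : ∀ i, (#(E i * S) : ℝ) ≤ (1 + ε i) * #(E i)) :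
    IsFoelner Gᵐᵒᵖ (Measure.count : Measure G) l (fun i ↦ (E i : Set G)) := by
  refine isFoelner_of_closure_eq_top (S := MulOpposite.unop ⁻¹' (S : Set G)) ?_
    (.of_forall fun _ ↦ .of_discrete)
    (.of_forall fun i ↦ by simpa [Measure.count_apply_finset] using (hE i).ne_empty)
    (.of_forall fun i ↦ by simp [Measure.count_apply_finset]) fun s hs ↦ ?_
  · rw [← Subgroup.op_closure, hS, Subgroup.op_top]
  have hbound : ∀ i, Measure.count ((s • (E i : Set G)) ∆ E i) / Measure.count (E i : Set G)
      ≤ ENNReal.ofReal (2 * ε i) := fun i ↦ by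
    rw [← Finset.coe_smul_finset, ← coe_symmDiff, Measure.count_apply_finset,
      Measure.count_apply_finset,
      ← ENNReal.ofReal_natCast, ← ENNReal.ofReal_natCast]
    refine ENNReal.div_le_of_le_mul ?_
    rw [← ENNReal.ofReal_mul' (Nat.cast_nonneg _)]
    refine ENNReal.ofReal_le_ofReal ?_
    have hcard := card_smul_symmDiff_add_le (E := E i) hS1 hs
    have hcard' : (#((s • E i) ∆ E i) : ℝ) + 2 * #(E i) ≤ 2 * #(E i * S) := by exact_mod_cast hcard
    linarith [hES i]
  exact tendsto_of_tendsto_of_tendsto_of_le_of_le tendsto_const_nhds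
    (by simpa using ENNReal.tendsto_ofReal (hε.const_mul 2)) (fun _ ↦ zero_le) hbound

lemma IsAmenable.of_ennreal_mean (m : Set G → ℝ≥0∞) (huniv : m Set.univ = 1)
    (hadd : ∀ s t, Disjoint s t → m (s ∪ t) = m s + m t)
    (hinv : ∀ (g : Gᵐᵒᵖ) s, m (g • s) = m s) : IsAmenable G := by
  have hle : ∀ s, m s ≤ 1 := fun s ↦ by
    rw [← huniv, ← Set.union_compl_self s, hadd _ _ disjoint_compl_right]
    exact le_self_add
  have hfin : ∀ s, m s ≠ ∞ := fun s ↦ ne_top_of_le_ne_top ENNReal.one_ne_top (hle s)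
  refine ⟨fun s ↦ (m s).toReal, fun s ↦ ⟨ENNReal.toReal_nonneg, ?_⟩, by simp [huniv],
    fun s t hst ↦ by simp only [hadd s t hst, ENNReal.toReal_add (hfin s) (hfin t)], fun s g ↦ ?_⟩
  · simpa using ENNReal.toReal_mono ENNReal.one_ne_top (hle s)
  · simp only [← hinv (MulOpposite.op g) s, ← Set.image_smul, op_smul_eq_mul]

lemma isAmenable_of_forall_card_mul_pow_lt [DecidableEq G] {S : Finset G} (hS1 : 1 ∈ S)
    (hS : Subgroup.closure (S : Set G) = ⊤)
    (h : ∀ k, 0 < k → ∃ F : Finset G, #(F * S ^ k) < 2 * #F) : IsAmenable G := by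
  let : MeasurableSpace G := ⊤
  choose F hF using fun n : ℕ ↦ h (n + 1) n.succ_pos
  choose j hj using fun n ↦ exists_card_mul_le_of_card_mul_pow_lt (F n) S n.succ_pos (hF n)
  have hne : ∀ n, (F n * S ^ j n).Nonempty := fun n ↦
    (card_pos.1 (by have := hF n; omega)).mul ⟨1, one_mem_pow hS1⟩
  have hε : Tendsto (fun n : ℕ ↦ 1 / ((n + 1 : ℕ) : ℝ)) atTop (𝓝 0) := by
    simpa only [Nat.cast_succ] using tendsto_one_div_add_atTop_nhds_zero_nat
  obtain ⟨m, huniv, hadd, hinv⟩ := (isFoelner_count_of_card_mul_le hS1 hS hne hε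
    fun n ↦ by simpa only [pow_succ, mul_assoc] using hj n).amenable
  exact IsAmenable.of_ennreal_mean m huniv (fun s t ↦ hadd s t .of_discrete) hinv

end Amenable

/-- Let `G` be a group with finite generating set `A`. Then `G` is
non-amenable if and only if `G` admits a doubling function: a map `ψ : G → G` such that the
word-metric distances `d(g, ψ(g))` are bounded above by a constant `K > 0` over all `g ∈ G`
(i.e. `ψ g` is obtained from `g` by multiplying on the right by a product of at most `K`
letters from `A ∪ A⁻¹`), and every element of `G` has at least two preimages under `ψ`. -/
theorem not_amenable_iff_exists_doubling {G : Type*} [Group G]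
    {ι : Type*} [Fintype ι] (A : ι → G)
    (hA : Subgroup.closure (Set.range A) = ⊤) :
    ¬ IsAmenable G ↔
      ∃ (ψ : G → G) (K : ℕ), 0 < K ∧
        (∀ g : G, ∃ l : List (ι × Bool),
          l.length ≤ K ∧ ψ g = g * (l.map (genOf A)).prod) ∧
        (∀ h : G, ∃ g₁ g₂ : G, g₁ ≠ g₂ ∧ ψ g₁ = h ∧ ψ g₂ = h) := by
  classical
  constructor
  · intro hna
    obtain ⟨K, hK, hdoubling⟩ : ∃ K, 0 < K ∧ ∀ F : Finset G, 2 * #F ≤ #(F * wordBall A K) := by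
      by_contra! h
      exact hna (isAmenable_of_forall_card_mul_pow_lt (one_mem_wordLetters A)
        (closure_wordLetters A hA) h)
    obtain ⟨ψ, hψ, htwo⟩ := exists_doubling_of_two_mul_card_le _ hdoubling
    rw [inv_wordBall, insert_eq_of_mem (one_mem_wordBall A K)] at hψ
    refine ⟨ψ, K, hK, fun g ↦ ?_, htwo⟩
    obtain ⟨l, hl, hw⟩ := (mem_wordBall_iff A).1 (hψ g)
    exact ⟨l, hl, by rw [← hw, mul_inv_cancel_left]⟩
  · rintro ⟨ψ, K, -, hψ, htwo⟩
    refine not_isAmenable_of_exists_doubling (wordBall A K) ψ (fun g ↦ ?_) htwo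
    obtain ⟨l, hl, hw⟩ := hψ g
    exact (mem_wordBall_iff A).2 ⟨l, hl, by rw [hw, inv_mul_cancel_left]⟩
end
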